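/- arXiv:2312.02905 — 4 statements merged into one kernel-verified Lean document; each statement's English description precedes it below -/
import Mathlib

section
/- Let e_1,…,e_n be arbitrary nonnegative real numbers, let α ∈ (0,1), and let 𝓗₀ ⊆ {1,…,n} be any subset. Then, deterministically, the false discovery proportion of the e-BH procedure applied to e_1,…,e_n at level α satisfies FDP ≤ (α/n) · Σ_{i∈𝓗₀} e_i. -/
open Finset
open scoped Classical

/-- The e-BH cutoff `k̂ = max{1 ≤ k ≤ n : e₍ₖ₎ ≥ n/(kα)}`, expressed via the
equivalent condition that at least `k` of the e-values are `≥ n/(kα)`;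
`k̂ = 0` when the set is empty. -/
noncomputable def eBHkhat (n : ℕ) (α : ℝ) (e : Fin n → ℝ) : ℕ :=
  sSup {k : ℕ | 1 ≤ k ∧ k ≤ n ∧
    k ≤ (Finset.univ.filter (fun i => (n : ℝ) / ((k : ℝ) * α) ≤ e i)).card}

/-- The rejection set of the e-BH procedure at level `α`: the hypotheses whose
e-values are `≥ n/(k̂α)` (no rejections if `k̂ = 0`). -/
noncomputable def eBHreject (n : ℕ) (α : ℝ) (e : Fin n → ℝ) : Finset (Fin n) :=
  if eBHkhat n α e = 0 then ∅
  else Finset.univ.filter (fun i => (n : ℝ) / ((eBHkhat n α e : ℝ) * α) ≤ e i)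

/-- False discovery proportion of a rejection set `R` with null set `H0`. -/
noncomputable def FDP (n : ℕ) (H0 R : Finset (Fin n)) : ℝ :=
  ((R ∩ H0).card : ℝ) / max 1 (R.card : ℝ)

/-!
Every rejected e-value is at least `n/(k̂α)` and at least `k̂` hypotheses are rejected. Hence
the number of rejected nulls is at most `(k̂α/n) ∑_{i∈H₀} eᵢ`, and dividing by the number of
rejections, which is at least `k̂`, gives the bound.
-/

def eBHcandidates (n : ℕ) (α : ℝ) (e : Fin n → ℝ) : Set ℕ :=
  {k | 1 ≤ k ∧ k ≤ n ∧ k ≤ #{i | (n : ℝ) / ((k : ℝ) * α) ≤ e i}}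

theorem eBHkhat_mem_candidates {n : ℕ} {α : ℝ} {e : Fin n → ℝ} (h : eBHkhat n α e ≠ 0) :
    eBHkhat n α e ∈ eBHcandidates n α e := by
  rw [show eBHkhat n α e = sSup (eBHcandidates n α e) from rfl] at h ⊢
  apply Nat.sSup_mem
  · by_contra hempty
    exact h (by rw [Set.not_nonempty_iff_eq_empty.mp hempty, csSup_empty]; rfl)
  · exact ⟨n, fun _ hk => hk.2.1⟩

theorem FDP_empty (n : ℕ) (H0 : Finset (Fin n)) : FDP n H0 ∅ = 0 := by
  simp [FDP]

theorem FDP_le_sum_div_of_le_of_card {n : ℕ} {H0 R : Finset (Fin n)} {e : Fin n → ℝ}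
    (he : ∀ i, 0 ≤ e i) {c : ℝ} (hc : 0 < c) (hR : ∀ i ∈ R, c ≤ e i) {k : ℕ} (hk : 0 < k)
    (hkR : k ≤ #R) : FDP n H0 R ≤ (∑ i ∈ H0, e i) / (k * c) := by
  have hk' : (0 : ℝ) < k := by exact_mod_cast hk
  have hnulls : #(R ∩ H0) * c ≤ ∑ i ∈ H0, e i :=
    calc #(R ∩ H0) * c ≤ ∑ i ∈ R ∩ H0, e i := by
          simpa using card_nsmul_le_sum _ _ c fun i hi => hR i (mem_inter.mp hi).1
      _ ≤ ∑ i ∈ H0, e i := sum_le_sum_of_subset_of_nonneg inter_subset_right fun i _ _ => he i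
  have hmax : (k : ℝ) ≤ max 1 (#R : ℝ) := le_max_of_le_right (by exact_mod_cast hkR)
  calc FDP n H0 R ≤ #(R ∩ H0) / (k : ℝ) := div_le_div_of_nonneg_left (by positivity) hk' hmax
    _ ≤ (∑ i ∈ H0, e i) / (k * c) := by
      rw [div_le_div_iff₀ hk' (by positivity)]
      nlinarith

/-- deterministically, the FDP of the e-BH procedure applied to
nonnegative numbers `e₁,…,eₙ` at level `α ∈ (0,1)` is at most `(α/n)·∑_{i∈H0} eᵢ`. -/
theorem ebh_fdp_bound (n : ℕ) (α : ℝ) (hα : 0 < α ∧ α < 1)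
    (e : Fin n → ℝ) (he : ∀ i, 0 ≤ e i) (H0 : Finset (Fin n)) :
    FDP n H0 (eBHreject n α e) ≤ α / n * ∑ i ∈ H0, e i := by
  obtain ⟨hα0, -⟩ := hα
  have hsum : 0 ≤ ∑ i ∈ H0, e i := sum_nonneg fun i _ => he i
  by_cases h0 : eBHkhat n α e = 0
  · rw [eBHreject, if_pos h0, FDP_empty]
    positivity
  obtain ⟨hK1, hKn, hKcard⟩ := eBHkhat_mem_candidates h0
  have hK : (0 : ℝ) < eBHkhat n α e := by exact_mod_cast hK1
  have hn : (0 : ℝ) < n := by exact_mod_cast hK1.trans hKn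
  rw [eBHreject, if_neg h0]
  calc _ ≤ (∑ i ∈ H0, e i) / (eBHkhat n α e * (n / (eBHkhat n α e * α))) :=
        FDP_le_sum_div_of_le_of_card he (by positivity)
          (fun i hi => (mem_filter.mp hi).2) hK1 hKcard
    _ = α / n * ∑ i ∈ H0, e i := by
        field_simp
end

section
/- Let e_1,…,e_n be nonnegative random variables on a probability space, let 𝓗₀ ⊆ {1,…,n} be the set of true null hypotheses, and suppose Σ_{i∈𝓗₀} E[e_i] ≤ n. Then for any α ∈ (0,1), the e-BH procedure applied to e_1,…,e_n at level α controls the false discovery rate at level α, i.e., E[FDP] ≤ α. -/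
open Finset MeasureTheory
open scoped Classical

lemma FDP_nonneg (n : ℕ) (H0 R : Finset (Fin n)) : 0 ≤ FDP n H0 R := by
  unfold FDP
  apply div_nonneg (by positivity)
  exact le_trans zero_le_one (le_max_left _ _)

lemma fdp_le_key (n : ℕ) (α : ℝ) (hα : 0 < α) (e : Fin n → ℝ) (he : ∀ i, 0 ≤ e i)
    (H0 : Finset (Fin n)) :
    FDP n H0 (eBHreject n α e) ≤ (α / n) * ∑ i ∈ H0, e i := by
  have hRHS : 0 ≤ (α / n) * ∑ i ∈ H0, e i := by
    apply mul_nonneg (div_nonneg hα.le (Nat.cast_nonneg n))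
    exact Finset.sum_nonneg fun i _ => he i
  by_cases hk : eBHkhat n α e = 0
  · unfold FDP eBHreject
    rw [if_pos hk]
    simpa using hRHS
  · -- k̂ belongs to the set
    set S := {k : ℕ | 1 ≤ k ∧ k ≤ n ∧
      k ≤ (Finset.univ.filter (fun i => (n : ℝ) / ((k : ℝ) * α) ≤ e i)).card} with hS
    have hbdd : BddAbove S := ⟨n, fun x hx => hx.2.1⟩
    have hne : S.Nonempty := by
      by_contra h
      rw [Set.not_nonempty_iff_eq_empty] at h
      apply hk
      unfold eBHkhat
      rw [← hS, h]
      simp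
    have hmem : eBHkhat n α e ∈ S := by
      have := Nat.sSup_mem hne hbdd
      unfold eBHkhat
      rw [← hS]
      exact this
    set k := eBHkhat n α e with hkdef
    obtain ⟨hk1, hkn, hkcard⟩ := hmem
    set R := Finset.univ.filter (fun i => (n : ℝ) / ((k : ℝ) * α) ≤ e i) with hR
    have hreject : eBHreject n α e = R := by
      unfold eBHreject
      rw [if_neg hk, ← hkdef, ← hR]
    have hn : 0 < n := lt_of_lt_of_le hk1 hkn
    have hnR : (0:ℝ) < (n:ℝ) := by exact_mod_cast hn
    have hkR : (0:ℝ) < (k:ℝ) := by exact_mod_cast hk1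
    -- each rejected null has (k α / n) * e i ≥ 1
    have hcard_le : ((R ∩ H0).card : ℝ) ≤ ((k:ℝ) * α / n) * ∑ i ∈ H0, e i := by
      have h1 : ((R ∩ H0).card : ℝ) = ∑ i ∈ R ∩ H0, (1:ℝ) := by simp
      rw [h1]
      have h2 : ∑ i ∈ R ∩ H0, (1:ℝ) ≤ ∑ i ∈ R ∩ H0, ((k:ℝ) * α / n) * e i := by
        apply Finset.sum_le_sum
        intro i hi
        have hiR : i ∈ R := Finset.mem_of_mem_inter_left hi
        rw [hR, Finset.mem_filter] at hiR
        have hie : (n : ℝ) / ((k : ℝ) * α) ≤ e i := hiR.2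
        have hkα : (0:ℝ) < (k:ℝ) * α := mul_pos hkR hα
        rw [div_le_iff₀ hkα] at hie
        rw [div_mul_eq_mul_div, le_div_iff₀ hnR]
        nlinarith
      refine h2.trans ?_
      rw [← Finset.mul_sum]
      apply mul_le_mul_of_nonneg_left _ (by positivity)
      apply Finset.sum_le_sum_of_subset_of_nonneg (Finset.inter_subset_right)
      intro i _ _; exact he i
    -- denominator ≥ k
    have hden : (k:ℝ) ≤ max 1 ((R.card : ℝ)) := by
      refine le_trans ?_ (le_max_right _ _)
      exact_mod_cast hkcard
    rw [hreject]
    unfold FDP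
    have hnum0 : (0:ℝ) ≤ ((R ∩ H0).card : ℝ) := Nat.cast_nonneg _
    calc ((R ∩ H0).card : ℝ) / max 1 (R.card : ℝ)
        ≤ ((R ∩ H0).card : ℝ) / (k:ℝ) := by
          apply div_le_div_of_nonneg_left hnum0 hkR hden
      _ ≤ (α / n) * ∑ i ∈ H0, e i := by
          rw [div_le_iff₀ hkR]
          calc ((R ∩ H0).card : ℝ) ≤ ((k:ℝ) * α / n) * ∑ i ∈ H0, e i := hcard_le
            _ = (α / n) * (∑ i ∈ H0, e i) * (k:ℝ) := by ring

/-- if `e₁,…,eₙ` are nonnegative random variables with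
`∑_{i∈H0} E[eᵢ] ≤ n`, then the e-BH procedure at level `α ∈ (0,1)` controls
the FDR at level `α`. -/
theorem ebh_fdr_control {Ω : Type*} [MeasurableSpace Ω]
    (μ : Measure Ω) [IsProbabilityMeasure μ]
    (n : ℕ) (α : ℝ) (hα : 0 < α ∧ α < 1)
    (e : Fin n → Ω → ℝ) (hmeas : ∀ i, Measurable (e i))
    (hint : ∀ i, Integrable (e i) μ)
    (hnonneg : ∀ i ω, 0 ≤ e i ω)
    (H0 : Finset (Fin n))
    (hsum : ∑ i ∈ H0, ∫ ω, e i ω ∂μ ≤ (n : ℝ)) :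
    ∫ ω, FDP n H0 (eBHreject n α (fun i => e i ω)) ∂μ ≤ α := by
  have hintsum : Integrable (fun ω => ∑ i ∈ H0, e i ω) μ :=
    integrable_finset_sum _ fun i _ => hint i
  have hintg : Integrable (fun ω => (α / n) * ∑ i ∈ H0, e i ω) μ :=
    hintsum.const_mul _
  have h1 : ∫ ω, FDP n H0 (eBHreject n α (fun i => e i ω)) ∂μ
      ≤ ∫ ω, (α / n) * ∑ i ∈ H0, e i ω ∂μ := by
    apply integral_mono_of_nonneg
    · exact Filter.Eventually.of_forall fun ω => FDP_nonneg _ _ _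
    · exact hintg
    · exact Filter.Eventually.of_forall fun ω =>
        fdp_le_key n α hα.1 _ (fun i => hnonneg i ω) H0
  refine h1.trans ?_
  rw [integral_const_mul, integral_finset_sum _ fun i _ => hint i]
  rcases Nat.eq_zero_or_pos n with hn | hn
  · subst hn
    have : H0 = ∅ := Finset.eq_empty_of_isEmpty H0
    simp [this]
    linarith [hα.1]
  · have hnR : (0:ℝ) < (n:ℝ) := by exact_mod_cast hn
    calc (α / n) * ∑ i ∈ H0, ∫ ω, e i ω ∂μ
        ≤ (α / n) * n := by
          apply mul_le_mul_of_nonneg_left hsum (div_nonneg hα.1.le (Nat.cast_nonneg n))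
      _ = α := by field_simp
end

section
/- Suppose the null p-values {p_i}_{i∈𝓗₀} are mutually independent, each satisfying P(p_i ≤ a) ≤ P(p_i ≥ 1−a) for all 0 ≤ a ≤ 1/2, and are jointly independent of the alternative p-values. Then the e-BH procedure at level α applied to the assembled group-wise BC e-values e_i = n_l · w_i · 𝟙{p_i ≤ T_l} / (1 + Σ_{j∈G_l} 𝟙{p_j ≥ 1−T_l}) with the data-dependent weights w_i = [(n/n_l)(1 + Σ_{j∈G_l, j≠i} 𝟙{p_j ≥ 1−T_l})] / [(1 + Σ_{j∈G_l, j≠i} 𝟙{p_j ≥ 1−T_l}) + Σ_{l'≠l} Σ_{j∈G_{l'}} 𝟙{p_j ≥ 1−T_{l',j}}] controls the overall false discovery rate at level α, i.e., E[(Σ_{i∈𝓗₀} δ_i)/max(1, Σ_{i=1}^n δ_i)] ≤ α, where δ is the e-BH rejection rule. -/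
open Finset MeasureTheory ProbabilityTheory
open scoped Classical

/-- The BC threshold at level `α` for the p-values `q` restricted to the group `G`
(`0` if the defining set is empty). -/
noncomputable def BCthresh {ι : Type*} (G : Finset ι) (α : ℝ) (q : ι → ℝ) : ℝ :=
  sSup {t : ℝ | 0 < t ∧ t < 1 / 2 ∧
    (1 + ((G.filter (fun j => 1 - t ≤ q j)).card : ℝ)) /
      max 1 ((G.filter (fun j => q j ≤ t)).card : ℝ) ≤ α}

namespace BCaux

variable {ι : Type*} [DecidableEq ι]

/-- The feasibility set defining the BC threshold. -/
def BCset (G : Finset ι) (α : ℝ) (q : ι → ℝ) : Set ℝ :=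
  {t : ℝ | 0 < t ∧ t < 1 / 2 ∧
    (1 + ((G.filter (fun j => 1 - t ≤ q j)).card : ℝ)) /
      max 1 ((G.filter (fun j => q j ≤ t)).card : ℝ) ≤ α}

lemma BCthresh_def (G : Finset ι) (α : ℝ) (q : ι → ℝ) :
    BCthresh G α q = sSup (BCset G α q) := rfl

lemma bddAbove_BCset (G : Finset ι) (α : ℝ) (q : ι → ℝ) : BddAbove (BCset G α q) :=
  ⟨1 / 2, fun _ ht => ht.2.1.le⟩

lemma BCthresh_nonneg (G : Finset ι) (α : ℝ) (q : ι → ℝ) : 0 ≤ BCthresh G α q :=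
  Real.sSup_nonneg (fun _ ht => ht.1.le)

lemma BCthresh_le_half (G : Finset ι) (α : ℝ) (q : ι → ℝ) : BCthresh G α q ≤ 1 / 2 := by
  rcases Set.eq_empty_or_nonempty (BCset G α q) with h | h
  · rw [BCthresh_def, h, Real.sSup_empty]; norm_num
  · exact csSup_le h (fun _ ht => ht.2.1.le)

lemma le_BCthresh {G : Finset ι} {α : ℝ} {q : ι → ℝ} {t : ℝ} (ht : t ∈ BCset G α q) :
    t ≤ BCthresh G α q :=
  le_csSup (bddAbove_BCset G α q) ht

lemma exists_BCset_of_lt {G : Finset ι} {α : ℝ} {q : ι → ℝ} {s : ℝ} (hs : 0 ≤ s)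
    (h : s < BCthresh G α q) : ∃ t ∈ BCset G α q, s < t := by
  rcases Set.eq_empty_or_nonempty (BCset G α q) with he | hne
  · rw [BCthresh_def, he, Real.sSup_empty] at h; linarith
  · exact exists_lt_of_lt_csSup hne h

lemma BCset_congr {G : Finset ι} {α : ℝ} {q q' : ι → ℝ} (h : ∀ k ∈ G, q k = q' k) :
    BCset G α q = BCset G α q' := by
  ext t
  have h1 : G.filter (fun j => 1 - t ≤ q j) = G.filter (fun j => 1 - t ≤ q' j) :=
    filter_congr (fun k hk => by rw [h k hk])
  have h2 : G.filter (fun j => q j ≤ t) = G.filter (fun j => q' j ≤ t) :=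
    filter_congr (fun k hk => by rw [h k hk])
  unfold BCset
  rw [Set.mem_setOf_eq, Set.mem_setOf_eq, h1, h2]

lemma BCthresh_congr {G : Finset ι} {α : ℝ} {q q' : ι → ℝ} (h : ∀ k ∈ G, q k = q' k) :
    BCthresh G α q = BCthresh G α q' := by
  rw [BCthresh_def, BCthresh_def, BCset_congr h]

lemma ratio_mono {α : ℝ} {N N' R R' : ℕ} (hN : N' ≤ N) (hR : R ≤ R')
    (h : (1 + (N : ℝ)) / max 1 (R : ℝ) ≤ α) :
    (1 + (N' : ℝ)) / max 1 (R' : ℝ) ≤ α := by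
  refine le_trans ?_ h
  apply div_le_div₀ (by positivity) (by exact_mod_cast by linarith)
    (lt_of_lt_of_le one_pos (le_max_left _ _))
    (max_le_max le_rfl (by exact_mod_cast hR))

lemma card_filter_erase {G : Finset ι} {i : ι} (hi : i ∈ G) (P : ι → Prop) :
    (G.filter P).card = ((G.erase i).filter P).card + (if P i then 1 else 0) := by
  classical
  rw [Finset.card_filter, Finset.card_filter, ← Finset.sum_erase_add _ _ hi]

lemma card_filter_update {G : Finset ι} {i : ι} (hiG : i ∈ G) (q : ι → ℝ) (a : ℝ)
    (P : ℝ → Prop) :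
    (G.filter (fun k => P (Function.update q i a k))).card
      = ((G.erase i).filter (fun k => P (q k))).card + (if P a then 1 else 0) := by
  classical
  rw [card_filter_erase hiG]
  congr 2
  · apply filter_congr
    intro k hk
    rw [Function.update_of_ne (Finset.mem_erase.1 hk).1]
  · rw [Function.update_self]

lemma count_pair_N {G : Finset ι} {q : ι → ℝ} {i j : ι} (hij : i ≠ j) (hiG : i ∈ G)
    (hjG : j ∈ G) (hqi : 1 / 2 ≤ q i) (hqj : 1 / 2 ≤ q j) {t : ℝ} (ht2 : t < 1 / 2)
    (hti : 1 - q i ≤ t) :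
    (G.filter (fun k => 1 - t ≤ Function.update q i (1 - q i) k)).card ≤
    (G.filter (fun k => 1 - t ≤ Function.update q j (1 - q j) k)).card := by
  classical
  have hjGi : j ∈ G.erase i := Finset.mem_erase.2 ⟨hij.symm, hjG⟩
  have hiGj : i ∈ G.erase j := Finset.mem_erase.2 ⟨hij, hiG⟩
  rw [card_filter_update hiG q (1 - q i) (fun x => 1 - t ≤ x),
    card_filter_update hjG q (1 - q j) (fun x => 1 - t ≤ x),
    card_filter_erase hjGi (fun k => 1 - t ≤ q k),
    card_filter_erase hiGj (fun k => 1 - t ≤ q k),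
    Finset.erase_right_comm (a := i) (b := j)]
  have e1 : ¬ (1 - t ≤ 1 - q i) := by intro h; linarith
  have e2 : ¬ (1 - t ≤ 1 - q j) := by intro h; linarith
  have e3 : (1 - t ≤ q i) := by linarith
  simp only [if_neg e1, if_neg e2, if_pos e3]
  have : (if 1 - t ≤ q j then 1 else 0) ≤ 1 := by split <;> omega
  omega

lemma count_pair_R {G : Finset ι} {q : ι → ℝ} {i j : ι} (hij : i ≠ j) (hiG : i ∈ G)
    (hjG : j ∈ G) (hqi : 1 / 2 ≤ q i) (hqj : 1 / 2 ≤ q j) {t : ℝ} (ht2 : t < 1 / 2)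
    (hti : 1 - q i ≤ t) :
    (G.filter (fun k => Function.update q j (1 - q j) k ≤ t)).card ≤
    (G.filter (fun k => Function.update q i (1 - q i) k ≤ t)).card := by
  classical
  have hjGi : j ∈ G.erase i := Finset.mem_erase.2 ⟨hij.symm, hjG⟩
  have hiGj : i ∈ G.erase j := Finset.mem_erase.2 ⟨hij, hiG⟩
  rw [card_filter_update hiG q (1 - q i) (fun x => x ≤ t),
    card_filter_update hjG q (1 - q j) (fun x => x ≤ t),
    card_filter_erase hjGi (fun k => q k ≤ t),
    card_filter_erase hiGj (fun k => q k ≤ t),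
    Finset.erase_right_comm (a := i) (b := j)]
  have e1 : (1 - q i ≤ t) := hti
  have e2 : ¬ (q j ≤ t) := by intro h; linarith
  have e3 : ¬ (q i ≤ t) := by intro h; linarith
  simp only [if_pos e1, if_neg e2, if_neg e3]
  have : (if 1 - q j ≤ t then 1 else 0) ≤ 1 := by split <;> omega
  omega

lemma BCset_pair {G : Finset ι} {α : ℝ} {q : ι → ℝ} {i j : ι} (hij : i ≠ j) (hiG : i ∈ G)
    (hjG : j ∈ G) (hqi : 1 / 2 ≤ q i) (hqj : 1 / 2 ≤ q j) {t : ℝ}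
    (hti : 1 - q i ≤ t) (htS : t ∈ BCset G α (Function.update q j (1 - q j))) :
    t ∈ BCset G α (Function.update q i (1 - q i)) := by
  obtain ⟨ht0, ht2, hr⟩ := htS
  exact ⟨ht0, ht2, ratio_mono (count_pair_N hij hiG hjG hqi hqj ht2 hti)
    (count_pair_R hij hiG hjG hqi hqj ht2 hti) hr⟩

lemma BCthresh_pair {G : Finset ι} {α : ℝ} {q : ι → ℝ} {i j : ι} (hij : i ≠ j) (hiG : i ∈ G)
    (hjG : j ∈ G) (hqj : 1 / 2 ≤ q j)
    (hTi : 1 - q i ≤ BCthresh G α (Function.update q i (1 - q i))) :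
    BCthresh G α (Function.update q j (1 - q j)) ≤
      BCthresh G α (Function.update q i (1 - q i)) := by
  have hqi : 1 / 2 ≤ q i := by
    have := BCthresh_le_half G α (Function.update q i (1 - q i)); linarith
  by_contra h
  push_neg at h
  obtain ⟨t, htS, htgt⟩ := exists_BCset_of_lt (BCthresh_nonneg _ _ _) h
  have hti : 1 - q i ≤ t := le_trans hTi htgt.le
  exact absurd (le_BCthresh (BCset_pair hij hiG hjG hqi hqj hti htS)) (not_le.2 htgt)

lemma count_slot_N {G : Finset ι} {q : ι → ℝ} {i : ι} (hiG : i ∈ G) {u u' t : ℝ}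
    (hu : u ≤ 1 / 2) (hu' : u' ≤ 1 / 2) (ht2 : t < 1 / 2) :
    (G.filter (fun k => 1 - t ≤ Function.update q i u k)).card =
    (G.filter (fun k => 1 - t ≤ Function.update q i u' k)).card := by
  classical
  rw [card_filter_update hiG q u (fun x => 1 - t ≤ x),
    card_filter_update hiG q u' (fun x => 1 - t ≤ x)]
  have e1 : ¬ (1 - t ≤ u) := by intro h; linarith
  have e2 : ¬ (1 - t ≤ u') := by intro h; linarith
  rw [if_neg e1, if_neg e2]

lemma count_slot_R_le {G : Finset ι} {q : ι → ℝ} {i : ι} (hiG : i ∈ G) {u u' t : ℝ}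
    (h : u' ≤ u) :
    (G.filter (fun k => Function.update q i u k ≤ t)).card ≤
    (G.filter (fun k => Function.update q i u' k ≤ t)).card := by
  classical
  rw [card_filter_update hiG q u (fun x => x ≤ t),
    card_filter_update hiG q u' (fun x => x ≤ t)]
  have : (if u ≤ t then 1 else 0) ≤ (if u' ≤ t then 1 else 0) := by
    split
    · rw [if_pos (by linarith)]
    · split <;> omega
  omega

lemma BCthresh_update_mono {G : Finset ι} {α : ℝ} {q : ι → ℝ} {i : ι} (hiG : i ∈ G)
    {u u' : ℝ} (h1 : u' ≤ u) (h2 : u ≤ 1 / 2) :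
    BCthresh G α (Function.update q i u) ≤ BCthresh G α (Function.update q i u') := by
  have hsub : BCset G α (Function.update q i u) ⊆ BCset G α (Function.update q i u') := by
    intro t ht
    obtain ⟨ht0, ht2, hr⟩ := ht
    refine ⟨ht0, ht2, ratio_mono (le_of_eq (count_slot_N hiG (by linarith) h2 ht2))
      (count_slot_R_le hiG h1) hr⟩
  rcases Set.eq_empty_or_nonempty (BCset G α (Function.update q i u)) with he | hne
  · rw [BCthresh_def, he, Real.sSup_empty]; exact BCthresh_nonneg _ _ _
  · exact csSup_le_csSup (bddAbove_BCset _ _ _) hne hsub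

lemma BCthresh_update_anti {G : Finset ι} {α : ℝ} {q : ι → ℝ} {i : ι} (hiG : i ∈ G)
    {u u' : ℝ} (h0 : u' ≤ u) (h2 : u ≤ 1 / 2)
    (hu : u ≤ BCthresh G α (Function.update q i u)) :
    BCthresh G α (Function.update q i u') ≤ BCthresh G α (Function.update q i u) := by
  by_contra h
  push_neg at h
  obtain ⟨t, htS, htgt⟩ := exists_BCset_of_lt (BCthresh_nonneg _ _ _) h
  have htmem : t ∈ BCset G α (Function.update q i u) := by
    obtain ⟨ht0, ht2, hr⟩ := htS
    refine ⟨ht0, ht2, ratio_mono (le_of_eq (count_slot_N hiG h2 (by linarith) ht2)) ?_ hr⟩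
    rw [card_filter_update hiG q u (fun x => x ≤ t),
      card_filter_update hiG q u' (fun x => x ≤ t),
      if_pos (by linarith : u ≤ t), if_pos (by linarith : u' ≤ t)]
  exact absurd (le_BCthresh htmem) (not_le.2 htgt)

lemma BCthresh_update_const {G : Finset ι} {α : ℝ} {q : ι → ℝ} {i : ι} (hiG : i ∈ G)
    {u u' : ℝ} (h0 : u' ≤ u) (h2 : u ≤ 1 / 2)
    (hu : u ≤ BCthresh G α (Function.update q i u)) :
    BCthresh G α (Function.update q i u') = BCthresh G α (Function.update q i u) :=
  le_antisymm (BCthresh_update_anti hiG h0 h2 hu) (BCthresh_update_mono hiG h0 h2)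
lemma measurable_BCthresh {ι : Type*} (G : Finset ι) (α : ℝ) :
    Measurable fun v : ι → ℝ => BCthresh G α v := by
  apply measurable_of_Ioi
  intro s
  rcases lt_or_ge s 0 with hs | hs
  · have huniv : (fun v : ι → ℝ => BCthresh G α v) ⁻¹' Set.Ioi s = Set.univ := by
      ext v
      simpa [Set.mem_Ioi] using lt_of_lt_of_le hs (BCthresh_nonneg G α v)
    rw [huniv]; exact MeasurableSet.univ
  · have hset : (fun v : ι → ℝ => BCthresh G α v) ⁻¹' Set.Ioi s
        = ⋃ r : ℚ, {v : ι → ℝ | s < (r : ℝ) ∧ (r : ℝ) ∈ BCset G α v} := by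
      ext v
      simp only [Set.mem_preimage, Set.mem_Ioi, Set.mem_iUnion, Set.mem_setOf_eq]
      constructor
      · intro h
        obtain ⟨t, htS, hst⟩ := exists_BCset_of_lt hs h
        obtain ⟨ht0, ht2, hr⟩ := htS
        classical
        set Fcrit : Finset ℝ :=
          insert (1/2 : ℝ) ((G.image (fun k => 1 - v k)).filter (fun y => t < y)) with hF
        have hFne : Fcrit.Nonempty := Finset.insert_nonempty _ _
        set m := Fcrit.min' hFne with hm
        have htm : t < m := by
          rw [hm, Finset.lt_min'_iff]
          intro y hy
          rcases Finset.mem_insert.1 hy with h1 | h1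
          · rw [h1]; exact ht2
          · exact (Finset.mem_filter.1 h1).2
        obtain ⟨r, hr1, hr2⟩ := exists_rat_btwn htm
        refine ⟨r, lt_trans hst hr1, lt_trans ht0 hr1, ?_, ?_⟩
        · have : m ≤ 1/2 := Finset.min'_le _ _ (Finset.mem_insert_self _ _)
          linarith
        · have hNeq : G.filter (fun k => 1 - (r:ℝ) ≤ v k) = G.filter (fun k => 1 - t ≤ v k) := by
            apply filter_congr
            intro k hk
            constructor
            · intro h1
              by_contra h2
              push_neg at h2
              have hcm : (1 - v k) ∈ Fcrit := by
                rw [hF]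
                refine Finset.mem_insert_of_mem (Finset.mem_filter.2 ⟨?_, by linarith⟩)
                exact Finset.mem_image.2 ⟨k, hk, rfl⟩
              have : m ≤ 1 - v k := Finset.min'_le _ _ hcm
              linarith
            · intro h1; linarith
          have hRle : (G.filter (fun k => v k ≤ t)).card ≤ (G.filter (fun k => v k ≤ (r:ℝ))).card := by
            apply Finset.card_le_card
            apply Finset.monotone_filter_right
            intro k _ hk
            exact le_trans hk hr1.le
          exact ratio_mono (le_of_eq (by rw [hNeq])) hRle hr
      · rintro ⟨r, hsr, hrS⟩
        exact lt_of_lt_of_le hsr (le_BCthresh hrS)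
    rw [hset]
    refine MeasurableSet.iUnion fun r => ?_
    have hmr : Measurable fun v : ι → ℝ =>
        (1 + ((G.filter (fun k => 1 - (r:ℝ) ≤ v k)).card : ℝ)) /
          max 1 ((G.filter (fun k => v k ≤ (r:ℝ))).card : ℝ) := by
      have hN : Measurable fun v : ι → ℝ => ((G.filter (fun k => 1 - (r:ℝ) ≤ v k)).card : ℝ) := by
        simp only [Finset.natCast_card_filter]
        exact Finset.measurable_sum _ (fun k _ => Measurable.ite
          (measurableSet_le measurable_const (measurable_pi_apply k))
          measurable_const measurable_const)
      have hR : Measurable fun v : ι → ℝ => ((G.filter (fun k => v k ≤ (r:ℝ))).card : ℝ) := by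
        simp only [Finset.natCast_card_filter]
        exact Finset.measurable_sum _ (fun k _ => Measurable.ite
          (measurableSet_le (measurable_pi_apply k) measurable_const)
          measurable_const measurable_const)
      exact (measurable_const.add hN).div (measurable_const.max hR)
    have : {v : ι → ℝ | s < (r : ℝ) ∧ (r : ℝ) ∈ BCset G α v}
        = {v : ι → ℝ | (1 + ((G.filter (fun k => 1 - (r:ℝ) ≤ v k)).card : ℝ)) /
            max 1 ((G.filter (fun k => v k ≤ (r:ℝ))).card : ℝ) ≤ α}
          ∩ {v : ι → ℝ | s < (r:ℝ) ∧ 0 < (r:ℝ) ∧ (r:ℝ) < 1/2} := by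
      ext v
      simp only [Set.mem_setOf_eq, Set.mem_inter_iff, BCset]
      tauto
    rw [this]
    exact (measurableSet_le hmr measurable_const).inter (MeasurableSet.const _)


lemma eBH_FDP_le {n : ℕ} (hn : 0 < n) {α : ℝ} (hα : 0 < α) (e : Fin n → ℝ)
    (he : ∀ i, 0 ≤ e i) (H0 : Finset (Fin n)) :
    FDP n H0 (eBHreject n α e) ≤ (α / n) * ∑ i ∈ H0, e i := by
  have hsum : 0 ≤ ∑ i ∈ H0, e i := Finset.sum_nonneg fun i _ => he i
  have hn' : (0:ℝ) < n := by exact_mod_cast hn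
  have hrhs : 0 ≤ (α / n) * ∑ i ∈ H0, e i := by positivity
  by_cases hk : eBHkhat n α e = 0
  · rw [eBHreject, if_pos hk]
    simpa [FDP] using hrhs
  · have hne : {k : ℕ | 1 ≤ k ∧ k ≤ n ∧
        k ≤ (Finset.univ.filter (fun i => (n : ℝ) / ((k : ℝ) * α) ≤ e i)).card}.Nonempty := by
      by_contra hemp
      rw [Set.not_nonempty_iff_eq_empty] at hemp
      apply hk
      rw [eBHkhat, hemp]
      simpa using (csSup_empty : sSup (∅ : Set ℕ) = ⊥)
    have hbdd : BddAbove {k : ℕ | 1 ≤ k ∧ k ≤ n ∧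
        k ≤ (Finset.univ.filter (fun i => (n : ℝ) / ((k : ℝ) * α) ≤ e i)).card} :=
      ⟨n, fun x hx => hx.2.1⟩
    have hmem := Nat.sSup_mem hne hbdd
    set k := eBHkhat n α e with hkdef
    have hmem' : 1 ≤ k ∧ k ≤ n ∧
        k ≤ (Finset.univ.filter (fun i => (n : ℝ) / ((k : ℝ) * α) ≤ e i)).card := hmem
    obtain ⟨hk1, hkn, hkcard⟩ := hmem'
    set R : Finset (Fin n) := Finset.univ.filter (fun i => (n : ℝ) / ((k : ℝ) * α) ≤ e i) with hR
    rw [eBHreject, if_neg hk]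
    have hk0 : (0:ℝ) < k := by exact_mod_cast hk1
    have hRk : (k:ℝ) ≤ R.card := by exact_mod_cast hkcard
    have hmax : max 1 ((R.card : ℝ)) = R.card := max_eq_right (by exact_mod_cast le_trans hk1 hkcard)
    rw [FDP, hmax]
    have hckey : ∀ i ∈ R ∩ H0, (n : ℝ) / ((k : ℝ) * α) ≤ e i := by
      intro i hi
      exact (Finset.mem_filter.1 (Finset.mem_inter.1 hi).1).2
    have hsum1 : ((R ∩ H0).card : ℝ) * ((n : ℝ) / ((k : ℝ) * α)) ≤ ∑ i ∈ R ∩ H0, e i := by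
      rw [← nsmul_eq_mul]
      exact Finset.card_nsmul_le_sum _ _ _ hckey
    have hsum2 : ∑ i ∈ R ∩ H0, e i ≤ ∑ i ∈ H0, e i :=
      Finset.sum_le_sum_of_subset_of_nonneg Finset.inter_subset_right (fun i _ _ => he i)
    have hstep1 : ((R ∩ H0).card : ℝ) / (R.card : ℝ) ≤ ((R ∩ H0).card : ℝ) / (k : ℝ) := by
      exact div_le_div_of_nonneg_left (Nat.cast_nonneg _) hk0 hRk
    refine le_trans hstep1 ?_
    have heq : ((R ∩ H0).card : ℝ) / (k : ℝ)
        = (α / n) * (((R ∩ H0).card : ℝ) * ((n : ℝ) / ((k : ℝ) * α))) := by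
      field_simp
    rw [heq]
    exact mul_le_mul_of_nonneg_left (le_trans hsum1 hsum2) (by positivity)

lemma measure_Iio_le (ν : Measure ℝ) (hnull : ν {x | x < 0 ∨ 1 < x} = 0)
    (hcdf : ∀ a : ℝ, 0 ≤ a → a ≤ 1/2 → ν (Set.Iic a) ≤ ν (Set.Ici (1 - a)))
    {c : ℝ} (hc0 : 0 < c) (hc2 : c ≤ 1/2) : ν (Set.Iio c) ≤ ν (Set.Ioi (1 - c)) := by
  have hmono : Monotone (fun m : ℕ => Set.Iic (c - 1/(m+1))) := by
    intro a b hab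
    apply Set.Iic_subset_Iic.2
    have h1 : (1:ℝ)/(b+1) ≤ 1/(a+1) := by
      apply one_div_le_one_div_of_le (by positivity)
      have : (a:ℝ) ≤ b := by exact_mod_cast hab
      linarith
    linarith
  have hUnion : ⋃ m : ℕ, Set.Iic (c - 1/(m+1)) = Set.Iio c := by
    ext x
    simp only [Set.mem_iUnion, Set.mem_Iic, Set.mem_Iio]
    constructor
    · rintro ⟨m, hm⟩
      have : (0:ℝ) < 1/(m+1) := by positivity
      linarith
    · intro hx
      obtain ⟨m, hm⟩ := exists_nat_one_div_lt (by linarith : (0:ℝ) < c - x)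
      exact ⟨m, by push_cast at hm ⊢; linarith⟩
  have htend := tendsto_measure_iUnion_atTop (μ := ν) hmono
  rw [hUnion] at htend
  refine le_of_tendsto htend (Filter.Eventually.of_forall fun m => ?_)
  rcases lt_or_ge (c - 1/(m+1)) 0 with h | h
  · have hsub : Set.Iic (c - 1/(m+1)) ⊆ {x : ℝ | x < 0 ∨ 1 < x} :=
      fun x hx => Or.inl (lt_of_le_of_lt hx h)
    calc ν (Set.Iic (c - 1/(m+1))) ≤ ν {x : ℝ | x < 0 ∨ 1 < x} := measure_mono hsub
    _ = 0 := hnull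
    _ ≤ _ := zero_le
  · refine le_trans (hcdf _ h (by
      have : (0:ℝ) < 1/(m+1) := by positivity
      linarith)) (measure_mono ?_)
    intro x hx
    simp only [Set.mem_Ici] at hx
    simp only [Set.mem_Ioi]
    have : (0:ℝ) < 1/(m+1) := by positivity
    linarith

lemma mirror_le (ν : Measure ℝ) [IsProbabilityMeasure ν]
    (hnull : ν {x | x < 0 ∨ 1 < x} = 0)
    (hcdf : ∀ a : ℝ, 0 ≤ a → a ≤ 1/2 → ν (Set.Iic a) ≤ ν (Set.Ici (1 - a)))
    (D : Set ℝ) (hD1 : D ⊆ Set.Icc 0 (1/2))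
    (hdown : ∀ u ∈ D, ∀ u', 0 ≤ u' → u' ≤ u → u' ∈ D)
    (φ : ℝ → ℝ) (hφ0 : ∀ x, 0 ≤ φ x)
    (hφD : ∀ u, 0 ≤ u → u ≤ 1/2 → u ∉ D → φ u = 0)
    (hφc : ∀ u ∈ D, ∀ u' ∈ D, φ u = φ u') :
    ∫ x, φ (min x (1 - x)) * (if x ≤ 1/2 then 1 else 0) ∂ν ≤
    ∫ x, φ (min x (1 - x)) * (if 1/2 ≤ x then 1 else 0) ∂ν := by
  have hae : ∀ᵐ x ∂ν, 0 ≤ x ∧ x ≤ 1 := by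
    rw [MeasureTheory.ae_iff]
    refine measure_mono_null ?_ hnull
    intro x hx
    simp only [Set.mem_setOf_eq, not_and_or, not_le] at hx ⊢
    exact hx
  rcases Set.eq_empty_or_nonempty D with hDemp | ⟨u₀, hu₀⟩
  · have hzero : (fun x => φ (min x (1 - x)) * (if x ≤ 1/2 then 1 else 0))
        =ᵐ[ν] (fun _ : ℝ => (0:ℝ)) := by
      filter_upwards [hae] with x hx
      by_cases hxh : x ≤ 1/2
      · show φ _ * _ = (0:ℝ)
        rw [if_pos hxh, mul_one, min_eq_left (by linarith [hx.1])]
        exact hφD x hx.1 hxh (by rw [hDemp]; exact Set.notMem_empty x)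
      · show φ _ * _ = (0:ℝ)
        rw [if_neg hxh, mul_zero]
    rw [integral_congr_ae hzero]
    have h0 : (∫ _ : ℝ, (0:ℝ) ∂ν) = 0 := integral_zero _ _
    rw [h0]
    exact integral_nonneg fun x => mul_nonneg (hφ0 _) (by split <;> norm_num)
  · have hbdd : BddAbove D := ⟨1/2, fun u hu => (hD1 hu).2⟩
    set c := sSup D with hcdefn
    have hc0 : 0 ≤ c := le_trans (hD1 hu₀).1 (le_csSup hbdd hu₀)
    have hc2 : c ≤ 1/2 := csSup_le ⟨u₀, hu₀⟩ fun u hu => (hD1 hu).2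
    set γ := φ u₀ with hγdefn
    have hγ0 : 0 ≤ γ := hφ0 _
    by_cases hcD : c ∈ D
    · have hDeq : D = Set.Icc 0 c := by
        ext u
        constructor
        · intro hu; exact ⟨(hD1 hu).1, le_csSup hbdd hu⟩
        · intro hu; exact hdown c hcD u hu.1 hu.2
      have hL : (fun x => φ (min x (1 - x)) * (if x ≤ 1/2 then 1 else 0))
          =ᵐ[ν] (Set.Icc (0:ℝ) c).indicator (fun _ => γ) := by
        filter_upwards [hae] with x hx
        obtain ⟨hx0, hx1⟩ := hx
        by_cases hxh : x ≤ 1/2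
        · rw [if_pos hxh, mul_one, min_eq_left (by linarith)]
          by_cases hxD : x ∈ D
          · rw [Set.indicator_of_mem (hDeq ▸ hxD)]
            exact hφc x hxD u₀ hu₀
          · rw [Set.indicator_of_notMem (fun hmem => hxD (hDeq ▸ hmem))]
            exact hφD x hx0 hxh hxD
        · rw [if_neg hxh, mul_zero, Set.indicator_of_notMem]
          intro hmem
          exact hxh (le_trans hmem.2 hc2)
      have hR : (fun x => φ (min x (1 - x)) * (if 1/2 ≤ x then 1 else 0))
          =ᵐ[ν] (Set.Icc (1 - c) 1).indicator (fun _ => γ) := by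
        filter_upwards [hae] with x hx
        obtain ⟨hx0, hx1⟩ := hx
        by_cases hxh : 1/2 ≤ x
        · rw [if_pos hxh, mul_one, min_eq_right (by linarith)]
          by_cases hxD : (1 - x) ∈ D
          · have hxmem : x ∈ Set.Icc (1 - c) 1 := by
              rw [hDeq] at hxD
              exact ⟨by linarith [hxD.2], hx1⟩
            rw [Set.indicator_of_mem hxmem]
            exact hφc _ hxD u₀ hu₀
          · have hxmem : x ∉ Set.Icc (1 - c) 1 := by
              intro hmem
              exact hxD (hDeq ▸ (⟨by linarith [hmem.2], by linarith [hmem.1]⟩ : (1-x) ∈ Set.Icc 0 c))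
            rw [Set.indicator_of_notMem hxmem]
            exact hφD _ (by linarith) (by linarith) hxD
        · rw [if_neg hxh, mul_zero, Set.indicator_of_notMem]
          intro hmem
          exact hxh (by linarith [hmem.1])
      rw [integral_congr_ae hL, integral_congr_ae hR,
        integral_indicator_const _ measurableSet_Icc, integral_indicator_const _ measurableSet_Icc]
      have hmle : ν (Set.Icc 0 c) ≤ ν (Set.Icc (1 - c) 1) := by
        calc ν (Set.Icc 0 c) ≤ ν (Set.Iic c) := measure_mono Set.Icc_subset_Iic_self
        _ ≤ ν (Set.Ici (1 - c)) := hcdf c hc0 hc2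
        _ ≤ ν (Set.Icc (1 - c) 1 ∪ {x | x < 0 ∨ 1 < x}) := measure_mono (fun x hx => by
            rcases le_or_gt x 1 with h | h
            · exact Or.inl ⟨hx, h⟩
            · exact Or.inr (Or.inr h))
        _ ≤ ν (Set.Icc (1 - c) 1) + ν {x | x < 0 ∨ 1 < x} := measure_union_le _ _
        _ = ν (Set.Icc (1 - c) 1) := by rw [hnull, add_zero]
      rw [smul_eq_mul, smul_eq_mul]
      exact mul_le_mul_of_nonneg_right
        (ENNReal.toReal_mono (measure_ne_top ν _) hmle) hγ0
    · have hc0' : 0 < c := by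
        rcases eq_or_lt_of_le hc0 with h | h
        · exfalso
          apply hcD
          have : u₀ ≤ c := le_csSup hbdd hu₀
          have : u₀ = c := le_antisymm this (by rw [← h]; exact (hD1 hu₀).1)
          rwa [← this]
        · exact h
      have hDeq : D = Set.Ico 0 c := by
        ext u
        constructor
        · intro hu
          refine ⟨(hD1 hu).1, lt_of_le_of_ne (le_csSup hbdd hu) ?_⟩
          rintro rfl
          exact hcD hu
        · rintro ⟨hu0, huc⟩
          obtain ⟨d, hd, hud⟩ := exists_lt_of_lt_csSup ⟨u₀, hu₀⟩ huc
          exact hdown d hd u hu0 hud.le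
      have hL : (fun x => φ (min x (1 - x)) * (if x ≤ 1/2 then 1 else 0))
          =ᵐ[ν] (Set.Ico (0:ℝ) c).indicator (fun _ => γ) := by
        filter_upwards [hae] with x hx
        obtain ⟨hx0, hx1⟩ := hx
        by_cases hxh : x ≤ 1/2
        · rw [if_pos hxh, mul_one, min_eq_left (by linarith)]
          by_cases hxD : x ∈ D
          · rw [Set.indicator_of_mem (hDeq ▸ hxD)]
            exact hφc x hxD u₀ hu₀
          · rw [Set.indicator_of_notMem (fun hmem => hxD (hDeq ▸ hmem))]
            exact hφD x hx0 hxh hxD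
        · rw [if_neg hxh, mul_zero, Set.indicator_of_notMem]
          intro hmem
          exact hxh (by linarith [hmem.2, hc2])
      have hR : (fun x => φ (min x (1 - x)) * (if 1/2 ≤ x then 1 else 0))
          =ᵐ[ν] (Set.Ioc (1 - c) 1).indicator (fun _ => γ) := by
        filter_upwards [hae] with x hx
        obtain ⟨hx0, hx1⟩ := hx
        by_cases hxh : 1/2 ≤ x
        · rw [if_pos hxh, mul_one, min_eq_right (by linarith)]
          by_cases hxD : (1 - x) ∈ D
          · have hxmem : x ∈ Set.Ioc (1 - c) 1 := by
              rw [hDeq] at hxD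
              exact ⟨by linarith [hxD.2], hx1⟩
            rw [Set.indicator_of_mem hxmem]
            exact hφc _ hxD u₀ hu₀
          · have hxmem : x ∉ Set.Ioc (1 - c) 1 := by
              intro hmem
              exact hxD (hDeq ▸ (⟨by linarith [hmem.2], by linarith [hmem.1]⟩ : (1-x) ∈ Set.Ico 0 c))
            rw [Set.indicator_of_notMem hxmem]
            exact hφD _ (by linarith) (by linarith) hxD
        · rw [if_neg hxh, mul_zero, Set.indicator_of_notMem]
          intro hmem
          exact hxh (by linarith [hmem.1])
      rw [integral_congr_ae hL, integral_congr_ae hR,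
        integral_indicator_const _ measurableSet_Ico, integral_indicator_const _ measurableSet_Ioc]
      have hmle : ν (Set.Ico 0 c) ≤ ν (Set.Ioc (1 - c) 1) := by
        calc ν (Set.Ico 0 c) ≤ ν (Set.Iio c) := measure_mono Set.Ico_subset_Iio_self
        _ ≤ ν (Set.Ioi (1 - c)) := measure_Iio_le ν hnull hcdf hc0' hc2
        _ ≤ ν (Set.Ioc (1 - c) 1 ∪ {x | x < 0 ∨ 1 < x}) := measure_mono (fun x hx => by
            rcases le_or_gt x 1 with h | h
            · exact Or.inl ⟨hx, h⟩
            · exact Or.inr (Or.inr h))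
        _ ≤ ν (Set.Ioc (1 - c) 1) + ν {x | x < 0 ∨ 1 < x} := measure_union_le _ _
        _ = ν (Set.Ioc (1 - c) 1) := by rw [hnull, add_zero]
      rw [smul_eq_mul, smul_eq_mul]
      exact mul_le_mul_of_nonneg_right
        (ENNReal.toReal_mono (measure_ne_top ν _) hmle) hγ0
lemma indepFun_pair_right {Ω β γ δ : Type*} [MeasurableSpace Ω] [MeasurableSpace β]
    [MeasurableSpace γ] [MeasurableSpace δ]
    {μ : Measure Ω} [IsProbabilityMeasure μ] {X : Ω → β} {Y : Ω → γ} {W : Ω → δ}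
    (hX : Measurable X) (hY : Measurable Y) (hW : Measurable W)
    (hXY : IndepFun X Y μ) (hXYW : IndepFun (fun ω => (X ω, Y ω)) W μ) :
    IndepFun X (fun ω => (Y ω, W ω)) μ := by
  rw [ProbabilityTheory.indepFun_iff_measure_inter_preimage_eq_mul]
  intro A B hA hB
  have hYW : Measurable fun ω => (Y ω, W ω) := hY.prodMk hW
  set ν₁ : Measure (γ × δ) := Measure.map (fun ω => (Y ω, W ω)) (μ.restrict (X ⁻¹' A)) with hν₁
  set ν₂ : Measure (γ × δ) := μ (X ⁻¹' A) • Measure.map (fun ω => (Y ω, W ω)) μ with hν₂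
  have hfin1 : IsFiniteMeasure ν₁ := by
    rw [hν₁]
    exact Measure.isFiniteMeasure_map _ _
  have hfinmap : IsFiniteMeasure (Measure.map (fun ω => (Y ω, W ω)) μ) :=
    Measure.isFiniteMeasure_map _ _
  have hfin2 : IsFiniteMeasure ν₂ := by
    haveI := hfinmap
    rw [hν₂]
    exact Measure.smul_finite (μ := Measure.map (fun ω => (Y ω, W ω)) μ) (measure_ne_top μ _)
  have hXYiff := (ProbabilityTheory.indepFun_iff_measure_inter_preimage_eq_mul).1 hXY
  have hXYWiff := (ProbabilityTheory.indepFun_iff_measure_inter_preimage_eq_mul).1 hXYW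
  have hrect : ∀ s : Set γ, ∀ t : Set δ, MeasurableSet s → MeasurableSet t →
      ν₁ (s ×ˢ t) = ν₂ (s ×ˢ t) := by
    intro s t hs ht
    have hst : MeasurableSet (s ×ˢ t) := hs.prod ht
    rw [hν₁, hν₂, Measure.map_apply hYW hst, Measure.restrict_apply (hYW hst),
      Measure.smul_apply, smul_eq_mul, Measure.map_apply hYW hst]
    have hpre : (fun ω => (Y ω, W ω)) ⁻¹' (s ×ˢ t) = Y ⁻¹' s ∩ W ⁻¹' t := by
      ext ω; simp [Set.mem_prod]
    rw [hpre]
    have h1 : Y ⁻¹' s ∩ W ⁻¹' t ∩ X ⁻¹' A = ((fun ω => (X ω, Y ω)) ⁻¹' (A ×ˢ s)) ∩ W ⁻¹' t := by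
      ext ω; simp [Set.mem_prod]; tauto
    have h2 : μ (((fun ω => (X ω, Y ω)) ⁻¹' (A ×ˢ s)) ∩ W ⁻¹' t)
        = μ ((fun ω => (X ω, Y ω)) ⁻¹' (A ×ˢ s)) * μ (W ⁻¹' t) :=
      hXYWiff (A ×ˢ s) t (hA.prod hs) ht
    have h3 : (fun ω => (X ω, Y ω)) ⁻¹' (A ×ˢ s) = X ⁻¹' A ∩ Y ⁻¹' s := by
      ext ω; simp [Set.mem_prod]
    have h4 : μ (X ⁻¹' A ∩ Y ⁻¹' s) = μ (X ⁻¹' A) * μ (Y ⁻¹' s) := hXYiff A s hA hs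
    have h5 : μ (Y ⁻¹' s ∩ W ⁻¹' t) = μ (Y ⁻¹' s) * μ (W ⁻¹' t) := by
      have := hXYWiff (Set.univ ×ˢ s) t ((MeasurableSet.univ).prod hs) ht
      have huniv : (fun ω => (X ω, Y ω)) ⁻¹' (Set.univ ×ˢ s) = Y ⁻¹' s := by
        ext ω; simp
      rwa [huniv] at this
    rw [h1, h2, h3, h4, h5]
    ring
  have hext : ν₁ = ν₂ := by
    refine @MeasureTheory.ext_of_generate_finite (γ × δ) _ _ _
      (Set.image2 (fun s t => s ×ˢ t) {s : Set γ | MeasurableSet s} {t : Set δ | MeasurableSet t})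
      generateFrom_prod.symm isPiSystem_prod hfin1 ?_ ?_
    · rintro S ⟨s, hs, t, ht, rfl⟩
      exact hrect s t hs ht
    · have := hrect Set.univ Set.univ MeasurableSet.univ MeasurableSet.univ
      simpa [Set.univ_prod_univ] using this
  have h7 : ν₁ B = ν₂ B := by rw [hext]
  rw [hν₁, hν₂, Measure.map_apply hYW hB, Measure.restrict_apply (hYW hB),
    Measure.smul_apply, smul_eq_mul, Measure.map_apply hYW hB] at h7
  rw [Set.inter_comm]
  exact h7
end BCaux

noncomputable def Bsum (n L : ℕ) (𝒢 : Fin L → Finset (Fin n)) (α : ℝ) (l : Fin L)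
    (v : Fin n → ℝ) : ℝ :=
  ∑ l' ∈ Finset.univ.erase l, (((𝒢 l').filter (fun j =>
    1 - BCthresh (𝒢 l') α (Function.update v j (min (v j) (1 - v j))) ≤ v j)).card : ℝ)

noncomputable def PhiV (n L : ℕ) (𝒢 : Fin L → Finset (Fin n)) (α : ℝ) (l : Fin L) (i : Fin n)
    (v : Fin n → ℝ) : ℝ :=
  (if v i ≤ BCthresh (𝒢 l) α v then 1 else 0) /
  (1 + (((𝒢 l).filter (fun j => j ≠ i ∧ 1 - BCthresh (𝒢 l) α v ≤ v j)).card : ℝ)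
     + Bsum n L 𝒢 α l v)

namespace BCaux

lemma Bsum_nonneg (n L : ℕ) (𝒢 : Fin L → Finset (Fin n)) (α : ℝ) (l : Fin L)
    (v : Fin n → ℝ) : 0 ≤ Bsum n L 𝒢 α l v :=
  Finset.sum_nonneg fun _ _ => Nat.cast_nonneg _

lemma PhiV_denom_pos (n L : ℕ) (𝒢 : Fin L → Finset (Fin n)) (α : ℝ) (l : Fin L) (i : Fin n)
    (v : Fin n → ℝ) :
    (0:ℝ) < 1 + (((𝒢 l).filter (fun j => j ≠ i ∧ 1 - BCthresh (𝒢 l) α v ≤ v j)).card : ℝ)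
      + Bsum n L 𝒢 α l v := by
  have h1 : (0:ℝ) ≤ (((𝒢 l).filter (fun j => j ≠ i ∧ 1 - BCthresh (𝒢 l) α v ≤ v j)).card : ℝ) :=
    Nat.cast_nonneg _
  have h2 := Bsum_nonneg n L 𝒢 α l v
  linarith

lemma PhiV_nonneg (n L : ℕ) (𝒢 : Fin L → Finset (Fin n)) (α : ℝ) (l : Fin L) (i : Fin n)
    (v : Fin n → ℝ) : 0 ≤ PhiV n L 𝒢 α l i v := by
  apply div_nonneg _ (PhiV_denom_pos n L 𝒢 α l i v).le
  split <;> norm_num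

lemma PhiV_le_one (n L : ℕ) (𝒢 : Fin L → Finset (Fin n)) (α : ℝ) (l : Fin L) (i : Fin n)
    (v : Fin n → ℝ) : PhiV n L 𝒢 α l i v ≤ 1 := by
  rw [PhiV, div_le_one (PhiV_denom_pos n L 𝒢 α l i v)]
  have h1 : (0:ℝ) ≤ (((𝒢 l).filter (fun j => j ≠ i ∧ 1 - BCthresh (𝒢 l) α v ≤ v j)).card : ℝ) :=
    Nat.cast_nonneg _
  have h2 := Bsum_nonneg n L 𝒢 α l v
  split <;> linarith

lemma measurable_update_min {n : ℕ} (j : Fin n) :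
    Measurable (fun v : Fin n → ℝ => Function.update v j (min (v j) (1 - v j))) := by
  apply measurable_pi_lambda
  intro k
  by_cases hk : k = j
  · subst hk
    simp only [Function.update_self]
    exact (measurable_pi_apply k).min (measurable_const.sub (measurable_pi_apply k))
  · simp only [Function.update_of_ne hk]
    exact measurable_pi_apply k

lemma measurable_Bsum (n L : ℕ) (𝒢 : Fin L → Finset (Fin n)) (α : ℝ) (l : Fin L) :
    Measurable (fun v : Fin n → ℝ => Bsum n L 𝒢 α l v) := by
  apply Finset.measurable_sum
  intro l' _
  simp only [Finset.natCast_card_filter]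
  apply Finset.measurable_sum
  intro j _
  refine Measurable.ite ?_ measurable_const measurable_const
  apply measurableSet_le
  · exact measurable_const.sub ((measurable_BCthresh _ _).comp (measurable_update_min j))
  · exact measurable_pi_apply j

lemma measurable_PhiV (n L : ℕ) (𝒢 : Fin L → Finset (Fin n)) (α : ℝ) (l : Fin L) (i : Fin n) :
    Measurable (fun v : Fin n → ℝ => PhiV n L 𝒢 α l i v) := by
  apply Measurable.div
  · refine Measurable.ite ?_ measurable_const measurable_const
    exact measurableSet_le (measurable_pi_apply i) (measurable_BCthresh _ _)
  · apply Measurable.add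
    apply Measurable.add measurable_const
    · simp only [Finset.natCast_card_filter]
      apply Finset.measurable_sum
      intro j _
      refine Measurable.ite ?_ measurable_const measurable_const
      by_cases hji : j = i
      · simp only [hji]
        have : {v : Fin n → ℝ | i ≠ i ∧ 1 - BCthresh (𝒢 l) α v ≤ v i} = ∅ := by
          ext v; simp
        rw [this]
        exact MeasurableSet.empty
      · have : {v : Fin n → ℝ | j ≠ i ∧ 1 - BCthresh (𝒢 l) α v ≤ v j}
            = {v : Fin n → ℝ | 1 - BCthresh (𝒢 l) α v ≤ v j} := by
          ext v; simp [hji]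
        rw [this]
        exact measurableSet_le (measurable_const.sub (measurable_BCthresh _ _))
          (measurable_pi_apply j)
    · exact measurable_Bsum n L 𝒢 α l
lemma Bsum_congr_slot {n L : ℕ} {𝒢 : Fin L → Finset (Fin n)} {α : ℝ} {l : Fin L} {i : Fin n}
    (hinot : ∀ l' : Fin L, l' ≠ l → i ∉ 𝒢 l') {v v' : Fin n → ℝ}
    (hvv : ∀ k, k ≠ i → v k = v' k) :
    Bsum n L 𝒢 α l v = Bsum n L 𝒢 α l v' := by
  apply Finset.sum_congr rfl
  intro l' hl'
  have hl'ne : l' ≠ l := (Finset.mem_erase.1 hl').1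
  have hiG := hinot l' hl'ne
  congr 1
  apply congrArg
  apply Finset.filter_congr
  intro j hj
  have hji : j ≠ i := fun h => hiG (h ▸ hj)
  have hT : BCthresh (𝒢 l') α (Function.update v j (min (v j) (1 - v j)))
      = BCthresh (𝒢 l') α (Function.update v' j (min (v' j) (1 - v' j))) := by
    apply BCthresh_congr
    intro k hk
    have hki : k ≠ i := fun h => hiG (h ▸ hk)
    by_cases hkj : k = j
    · subst hkj
      rw [Function.update_self, Function.update_self, hvv k hki]
    · rw [Function.update_of_ne hkj, Function.update_of_ne hkj, hvv k hki]
  rw [hT, hvv j hji]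

lemma PhiV_slot_eq {n L : ℕ} {𝒢 : Fin L → Finset (Fin n)} {α : ℝ} {l : Fin L} {i : Fin n}
    (hiG : i ∈ 𝒢 l) (hinot : ∀ l' : Fin L, l' ≠ l → i ∉ 𝒢 l') (z : Fin n → ℝ)
    {u u' : ℝ} (h1 : u' ≤ u) (h2 : u ≤ 1/2)
    (hu : u ≤ BCthresh (𝒢 l) α (Function.update z i u)) :
    PhiV n L 𝒢 α l i (Function.update z i u') = PhiV n L 𝒢 α l i (Function.update z i u) := by
  have hT : BCthresh (𝒢 l) α (Function.update z i u')
      = BCthresh (𝒢 l) α (Function.update z i u) :=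
    BCthresh_update_const hiG h1 h2 hu
  have hcard : ((𝒢 l).filter (fun j => j ≠ i ∧
        1 - BCthresh (𝒢 l) α (Function.update z i u') ≤ Function.update z i u' j))
      = ((𝒢 l).filter (fun j => j ≠ i ∧
        1 - BCthresh (𝒢 l) α (Function.update z i u) ≤ Function.update z i u j)) := by
    apply Finset.filter_congr
    intro j _
    by_cases hji : j = i
    · subst hji; simp
    · rw [Function.update_of_ne hji, Function.update_of_ne hji, hT]
  have hB : Bsum n L 𝒢 α l (Function.update z i u') = Bsum n L 𝒢 α l (Function.update z i u) :=
    Bsum_congr_slot hinot (fun k hk => by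
      rw [Function.update_of_ne hk, Function.update_of_ne hk])
  have h3 : u' ≤ BCthresh (𝒢 l) α (Function.update z i u') := by
    rw [hT]; linarith
  rw [PhiV, PhiV, hcard, hB, hT]
  simp only [Function.update_self]
  rw [hT] at h3
  rw [if_pos h3, if_pos hu]

lemma e_le {n L : ℕ} {𝒢 : Fin L → Finset (Fin n)} {α : ℝ} {l : Fin L} {i : Fin n}
    (hiG : i ∈ 𝒢 l) (v : Fin n → ℝ) :
    ((𝒢 l).card : ℝ) *
        (((n : ℝ) / ((𝒢 l).card : ℝ) *
          (1 + (((𝒢 l).filter (fun j => j ≠ i ∧ 1 - BCthresh (𝒢 l) α v ≤ v j)).card : ℝ))) /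
        ((1 + (((𝒢 l).filter (fun j => j ≠ i ∧ 1 - BCthresh (𝒢 l) α v ≤ v j)).card : ℝ)) +
          Bsum n L 𝒢 α l v)) *
        (if v i ≤ BCthresh (𝒢 l) α v then 1 else 0) /
      (1 + (((𝒢 l).filter (fun j => 1 - BCthresh (𝒢 l) α v ≤ v j)).card : ℝ))
    ≤ (n : ℝ) * (PhiV n L 𝒢 α l i (Function.update v i (min (v i) (1 - v i))) *
        (if v i ≤ 1/2 then 1 else 0)) := by
  by_cases hind : v i ≤ BCthresh (𝒢 l) α v
  · have hhalf : v i ≤ 1/2 := le_trans hind (BCthresh_le_half _ _ _)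
    have hmin : min (v i) (1 - v i) = v i := min_eq_left (by linarith)
    have hupd : Function.update v i (min (v i) (1 - v i)) = v := by
      rw [hmin]; exact Function.update_eq_self i v
    rw [hupd, if_pos hhalf, if_pos hind, PhiV, if_pos hind]
    set Acm := (((𝒢 l).filter (fun j => j ≠ i ∧ 1 - BCthresh (𝒢 l) α v ≤ v j)).card : ℝ) with hAcmd
    set Ac := (((𝒢 l).filter (fun j => 1 - BCthresh (𝒢 l) α v ≤ v j)).card : ℝ) with hAcd
    set Bs := Bsum n L 𝒢 α l v with hBsd
    have hAcm0 : 0 ≤ Acm := Nat.cast_nonneg _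
    have hAc0 : 0 ≤ Ac := Nat.cast_nonneg _
    have hAc : Acm ≤ Ac := by
      rw [hAcmd, hAcd]
      apply Nat.cast_le.2
      apply Finset.card_le_card
      apply Finset.monotone_filter_right
      intro j _ hj
      exact hj.2
    have hBs : 0 ≤ Bs := Bsum_nonneg n L 𝒢 α l v
    have hnl : (0:ℝ) < ((𝒢 l).card : ℝ) := by
      exact_mod_cast Finset.card_pos.2 ⟨i, hiG⟩
    have hd1 : (0:ℝ) < 1 + Acm + Bs := by linarith
    have hd2 : (0:ℝ) < 1 + Ac := by linarith
    have heq : ((𝒢 l).card : ℝ) * ((n:ℝ)/((𝒢 l).card:ℝ) * (1+Acm) / ((1+Acm)+Bs)) * 1 / (1+Ac)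
        = (n:ℝ) * (1+Acm) / ((1+Acm+Bs) * (1+Ac)) := by
      field_simp
    rw [heq]
    have hrhs : (n:ℝ) * (1/(1+Acm+Bs) * 1) = (n:ℝ) / (1+Acm+Bs) := by ring
    rw [hrhs, div_le_div_iff₀ (by positivity) hd1]
    have hkey := mul_le_mul_of_nonneg_left (by linarith : 1+Acm ≤ 1+Ac)
      (mul_nonneg (Nat.cast_nonneg n) hd1.le)
    nlinarith [hkey]
  · rw [if_neg hind, mul_zero, zero_div]
    apply mul_nonneg (Nat.cast_nonneg n)
    apply mul_nonneg (PhiV_nonneg _ _ _ _ _ _ _)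
    split <;> norm_num

lemma Psi_le_W {n L : ℕ} {𝒢 : Fin L → Finset (Fin n)} {α : ℝ} {l : Fin L} {i : Fin n}
    (hiG : i ∈ 𝒢 l) (hinot : ∀ l' : Fin L, l' ≠ l → i ∉ 𝒢 l') (q : Fin n → ℝ) :
    PhiV n L 𝒢 α l i (Function.update q i (min (q i) (1 - q i))) *
        (if 1/2 ≤ q i then 1 else 0)
    ≤ (if 1 - BCthresh (𝒢 l) α (Function.update q i (min (q i) (1 - q i))) ≤ q i
        then 1 else 0) /
      ((∑ l' : Fin L, ((𝒢 l').filter (fun j =>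
        1 - BCthresh (𝒢 l') α (Function.update q j (min (q j) (1 - q j))) ≤ q j)).card : ℕ) : ℝ) := by
  set T := BCthresh (𝒢 l) α (Function.update q i (min (q i) (1 - q i))) with hTd
  set Ct : ℕ := ∑ l' : Fin L, ((𝒢 l').filter (fun j =>
    1 - BCthresh (𝒢 l') α (Function.update q j (min (q j) (1 - q j))) ≤ q j)).card with hCtd
  by_cases hhalf : 1/2 ≤ q i
  · have hmin : min (q i) (1 - q i) = 1 - q i := min_eq_right (by linarith)
    by_cases hev : 1 - T ≤ q i
    · -- main case
      have hiC : i ∈ (𝒢 l).filter (fun j =>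
          1 - BCthresh (𝒢 l) α (Function.update q j (min (q j) (1 - q j))) ≤ q j) :=
        Finset.mem_filter.2 ⟨hiG, hev⟩
      have hsubset : (𝒢 l).filter (fun j =>
            1 - BCthresh (𝒢 l) α (Function.update q j (min (q j) (1 - q j))) ≤ q j)
          ⊆ insert i ((𝒢 l).filter (fun j => j ≠ i ∧
            1 - T ≤ Function.update q i (min (q i) (1 - q i)) j)) := by
        intro j hj
        obtain ⟨hjG, hCj⟩ := Finset.mem_filter.1 hj
        by_cases hji : j = i
        · subst hji; exact Finset.mem_insert_self _ _
        · refine Finset.mem_insert_of_mem (Finset.mem_filter.2 ⟨hjG, hji, ?_⟩)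
          have hTj2 := BCthresh_le_half (𝒢 l) α
            (Function.update q j (min (q j) (1 - q j)))
          have hqj : 1/2 ≤ q j := by linarith
          have hminj : min (q j) (1 - q j) = 1 - q j := min_eq_right (by linarith)
          have hTi' : 1 - q i ≤ BCthresh (𝒢 l) α (Function.update q i (1 - q i)) := by
            have h' : 1 - q i ≤ T := by linarith
            rwa [hTd, hmin] at h'
          have hpair := BCthresh_pair (fun h => hji (h.symm)) hiG hjG hqj hTi'
          rw [Function.update_of_ne hji]
          rw [hTd, hmin]
          rw [hminj] at hCj
          linarith
      have hClge : 1 ≤ ((𝒢 l).filter (fun j =>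
          1 - BCthresh (𝒢 l) α (Function.update q j (min (q j) (1 - q j))) ≤ q j)).card :=
        Finset.card_pos.2 ⟨i, hiC⟩
      have hCtge : ((𝒢 l).filter (fun j =>
          1 - BCthresh (𝒢 l) α (Function.update q j (min (q j) (1 - q j))) ≤ q j)).card ≤ Ct := by
        rw [hCtd]
        exact Finset.single_le_sum (f := fun l' : Fin L => ((𝒢 l').filter (fun j =>
          1 - BCthresh (𝒢 l') α (Function.update q j (min (q j) (1 - q j))) ≤ q j)).card)
          (fun _ _ => Nat.zero_le _) (Finset.mem_univ l)
      have hCt1 : 1 ≤ Ct := le_trans hClge hCtge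
      have hCtpos : (0:ℝ) < (Ct:ℝ) := by exact_mod_cast hCt1
      -- Bsum equals sum over erased
      have hBeq : Bsum n L 𝒢 α l (Function.update q i (min (q i) (1 - q i)))
          = Bsum n L 𝒢 α l q :=
        Bsum_congr_slot hinot (fun k hk => Function.update_of_ne hk _ _)
      have hBq : Bsum n L 𝒢 α l q = ∑ l' ∈ Finset.univ.erase l, (((𝒢 l').filter (fun j =>
          1 - BCthresh (𝒢 l') α (Function.update q j (min (q j) (1 - q j))) ≤ q j)).card : ℝ) := rfl
      have hCtsplit : (Ct : ℝ) = (((𝒢 l).filter (fun j =>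
            1 - BCthresh (𝒢 l) α (Function.update q j (min (q j) (1 - q j))) ≤ q j)).card : ℝ)
          + ∑ l' ∈ Finset.univ.erase l, (((𝒢 l').filter (fun j =>
            1 - BCthresh (𝒢 l') α (Function.update q j (min (q j) (1 - q j))) ≤ q j)).card : ℝ) := by
        rw [hCtd]
        push_cast
        rw [← Finset.add_sum_erase _ _ (Finset.mem_univ l)]
      have hcard_le : (((𝒢 l).filter (fun j =>
            1 - BCthresh (𝒢 l) α (Function.update q j (min (q j) (1 - q j))) ≤ q j)).card : ℝ)
          ≤ 1 + (((𝒢 l).filter (fun j => j ≠ i ∧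
            1 - T ≤ Function.update q i (min (q i) (1 - q i)) j)).card : ℝ) := by
        have h1 := Finset.card_le_card hsubset
        have h2 := Finset.card_insert_le i ((𝒢 l).filter (fun j => j ≠ i ∧
          1 - T ≤ Function.update q i (min (q i) (1 - q i)) j))
        have h3 := le_trans h1 h2
        have h4 := (Nat.cast_le (α := ℝ)).2 h3
        push_cast at h4
        linarith
      have hdenom_ge : (Ct : ℝ) ≤ 1 + (((𝒢 l).filter (fun j => j ≠ i ∧
            1 - T ≤ Function.update q i (min (q i) (1 - q i)) j)).card : ℝ)
          + Bsum n L 𝒢 α l (Function.update q i (min (q i) (1 - q i))) := by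
        rw [hCtsplit, hBeq, hBq]
        linarith
      rw [if_pos hev, PhiV, ← hTd]
      have hnum : Function.update q i (min (q i) (1 - q i)) i ≤ T := by
        rw [Function.update_self, hmin]
        linarith
      rw [if_pos hnum, if_pos hhalf, mul_one]
      exact one_div_le_one_div_of_le hCtpos hdenom_ge
    · -- event fails : both sides 0
      rw [if_neg hev, zero_div]
      have hnum : ¬ (Function.update q i (min (q i) (1 - q i)) i ≤ T) := by
        rw [Function.update_self, hmin]
        intro h
        exact hev (by linarith)
      rw [PhiV, ← hTd, if_neg hnum, zero_div, zero_mul]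
  · rw [if_neg hhalf, mul_zero]
    apply div_nonneg _ (Nat.cast_nonneg _)
    split <;> norm_num
lemma e_nonneg_aux {n L : ℕ} {𝒢 : Fin L → Finset (Fin n)} {α : ℝ} {l : Fin L} {i : Fin n}
    (v : Fin n → ℝ) :
    (0:ℝ) ≤ ((𝒢 l).card : ℝ) *
        (((n : ℝ) / ((𝒢 l).card : ℝ) *
          (1 + (((𝒢 l).filter (fun j => j ≠ i ∧ 1 - BCthresh (𝒢 l) α v ≤ v j)).card : ℝ))) /
        ((1 + (((𝒢 l).filter (fun j => j ≠ i ∧ 1 - BCthresh (𝒢 l) α v ≤ v j)).card : ℝ)) +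
          Bsum n L 𝒢 α l v)) *
        (if v i ≤ BCthresh (𝒢 l) α v then 1 else 0) /
      (1 + (((𝒢 l).filter (fun j => 1 - BCthresh (𝒢 l) α v ≤ v j)).card : ℝ)) := by
  apply div_nonneg
  · apply mul_nonneg
    · apply mul_nonneg (Nat.cast_nonneg _)
      apply div_nonneg
      · positivity
      · have := Bsum_nonneg n L 𝒢 α l v
        have h2 : (0:ℝ) ≤ (((𝒢 l).filter (fun j => j ≠ i ∧ 1 - BCthresh (𝒢 l) α v ≤ v j)).card : ℝ) :=
          Nat.cast_nonneg _
        linarith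
    · split <;> norm_num
  · positivity

lemma sum_Psi_le_one {n L : ℕ} {𝒢 : Fin L → Finset (Fin n)} {α : ℝ}
    (gl : Fin n → Fin L) (hgl1 : ∀ i, i ∈ 𝒢 (gl i)) (hgl2 : ∀ i l, i ∈ 𝒢 l → l = gl i)
    (q : Fin n → ℝ) (H0 : Finset (Fin n)) :
    ∑ i ∈ H0, PhiV n L 𝒢 α (gl i) i (Function.update q i (min (q i) (1 - q i))) *
      (if 1/2 ≤ q i then 1 else 0) ≤ 1 := by
  classical
  set Ct : ℕ := ∑ l' : Fin L, ((𝒢 l').filter (fun j =>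
    1 - BCthresh (𝒢 l') α (Function.update q j (min (q j) (1 - q j))) ≤ q j)).card with hCtd
  have hstep : ∀ i : Fin n, PhiV n L 𝒢 α (gl i) i (Function.update q i (min (q i) (1 - q i))) *
      (if 1/2 ≤ q i then 1 else 0)
      ≤ (if 1 - BCthresh (𝒢 (gl i)) α (Function.update q i (min (q i) (1 - q i))) ≤ q i
          then 1 else 0) / (Ct : ℝ) := by
    intro i
    exact Psi_le_W (hgl1 i) (fun l' hne hmem => hne (hgl2 i l' hmem)) q
  have hterm_nonneg : ∀ i : Fin n, (0:ℝ) ≤ (if 1 - BCthresh (𝒢 (gl i)) α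
      (Function.update q i (min (q i) (1 - q i))) ≤ q i then 1 else 0) / (Ct : ℝ) := by
    intro i
    apply div_nonneg _ (Nat.cast_nonneg _)
    split <;> norm_num
  refine le_trans (Finset.sum_le_sum (fun i _ => hstep i)) ?_
  refine le_trans (Finset.sum_le_sum_of_subset_of_nonneg (Finset.subset_univ H0)
    (fun i _ _ => hterm_nonneg i)) ?_
  have hfib := Finset.sum_fiberwise_of_maps_to (s := (Finset.univ : Finset (Fin n)))
    (g := gl) (t := (Finset.univ : Finset (Fin L)))
    (fun i _ => Finset.mem_univ (gl i))
    (fun i => (if 1 - BCthresh (𝒢 (gl i)) α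
      (Function.update q i (min (q i) (1 - q i))) ≤ q i then (1:ℝ) else 0) / (Ct : ℝ))
  rw [← hfib]
  have hfiber : ∀ l : Fin L, (Finset.univ.filter (fun i => gl i = l)) = 𝒢 l := by
    intro l
    ext i
    simp only [Finset.mem_filter, Finset.mem_univ, true_and]
    constructor
    · rintro rfl; exact hgl1 i
    · intro h; exact (hgl2 i l h).symm
  have hgroup : ∀ l : Fin L, (∑ i ∈ Finset.univ.filter (fun i => gl i = l),
      (if 1 - BCthresh (𝒢 (gl i)) α
        (Function.update q i (min (q i) (1 - q i))) ≤ q i then (1:ℝ) else 0) / (Ct : ℝ))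
      = (((𝒢 l).filter (fun j =>
        1 - BCthresh (𝒢 l) α (Function.update q j (min (q j) (1 - q j))) ≤ q j)).card : ℝ)
        / (Ct : ℝ) := by
    intro l
    rw [hfiber l]
    rw [← Finset.sum_div]
    congr 1
    rw [← Finset.sum_boole]
    apply Finset.sum_congr rfl
    intro i hi
    rw [← hgl2 i l hi]
  rw [Finset.sum_congr rfl (fun l _ => hgroup l), ← Finset.sum_div]
  have hsum_eq : (∑ l : Fin L, (((𝒢 l).filter (fun j =>
      1 - BCthresh (𝒢 l) α (Function.update q j (min (q j) (1 - q j))) ≤ q j)).card : ℝ))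
      = (Ct : ℝ) := by
    rw [hCtd]
    push_cast
    rfl
  rw [hsum_eq]
  rcases Nat.eq_zero_or_pos Ct with hCt0 | hCtpos
  · rw [hCt0]
    norm_num
  · rw [div_self (by exact_mod_cast hCtpos.ne' : (Ct:ℝ) ≠ 0)]
lemma PhiV_eq_zero {n L : ℕ} {𝒢 : Fin L → Finset (Fin n)} {α : ℝ} {l : Fin L} {i : Fin n}
    {v : Fin n → ℝ} (h : ¬ (v i ≤ BCthresh (𝒢 l) α v)) : PhiV n L 𝒢 α l i v = 0 := by
  rw [PhiV, if_neg h, zero_div]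

lemma PhiV_prod_bounds {n L : ℕ} (𝒢 : Fin L → Finset (Fin n)) (α : ℝ) (l : Fin L) (i : Fin n)
    (v : Fin n → ℝ) (c : Prop) [Decidable c] :
    0 ≤ PhiV n L 𝒢 α l i v * (if c then (1:ℝ) else 0) ∧
    PhiV n L 𝒢 α l i v * (if c then (1:ℝ) else 0) ≤ 1 := by
  constructor
  · exact mul_nonneg (PhiV_nonneg _ _ _ _ _ _ _) (by split <;> norm_num)
  · calc PhiV n L 𝒢 α l i v * (if c then (1:ℝ) else 0) ≤ 1 * 1 :=
        mul_le_mul (PhiV_le_one _ _ _ _ _ _ _) (by split <;> norm_num)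
          (by split <;> norm_num) zero_le_one
    _ = 1 := one_mul 1

end BCaux

open BCaux

/-- the e-BH procedure at level `α` applied to the assembled
group-wise BC e-values with the data-dependent weights controls the overall FDR
at level `α`. -/
theorem assembled_ebh_fdr_control
    {Ω : Type*} [MeasurableSpace Ω] (μ : Measure Ω) [IsProbabilityMeasure μ]
    (n L : ℕ) (𝒢 : Fin L → Finset (Fin n))
    (hpart : ∀ i : Fin n, ∃! l : Fin L, i ∈ 𝒢 l)
    (α : ℝ) (hα : 0 < α ∧ α < 1)
    (p : Fin n → Ω → ℝ) (hmeas : ∀ i, Measurable (p i))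
    (hrange : ∀ i ω, p i ω ∈ Set.Icc (0 : ℝ) 1)
    (H0 : Finset (Fin n))
    (hnullindep : iIndepFun
      (fun i : {i // i ∈ H0} => p i.1) μ)
    (hsep : IndepFun (fun ω => fun i : {i // i ∈ H0} => p i.1 ω)
      (fun ω => fun i : {i // i ∉ H0} => p i.1 ω) μ)
    (hsym : ∀ i ∈ H0, ∀ a : ℝ, 0 ≤ a → a ≤ 1 / 2 →
      μ {ω | p i ω ≤ a} ≤ μ {ω | 1 - a ≤ p i ω})
    (w e : Fin n → Ω → ℝ)
    (hw : ∀ l : Fin L, ∀ i ∈ 𝒢 l, ∀ ω,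
      w i ω =
        ((n : ℝ) / ((𝒢 l).card : ℝ) *
          (1 + (((𝒢 l).filter (fun j => j ≠ i ∧
              1 - BCthresh (𝒢 l) α (fun k => p k ω) ≤ p j ω)).card : ℝ))) /
        ((1 + (((𝒢 l).filter (fun j => j ≠ i ∧
              1 - BCthresh (𝒢 l) α (fun k => p k ω) ≤ p j ω)).card : ℝ)) +
          ∑ l' ∈ Finset.univ.erase l,
            (((𝒢 l').filter (fun j =>
              1 - BCthresh (𝒢 l') α
                (Function.update (fun k => p k ω) j (min (p j ω) (1 - p j ω)))
                  ≤ p j ω)).card : ℝ)))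
    (he : ∀ l : Fin L, ∀ i ∈ 𝒢 l, ∀ ω,
      e i ω =
        ((𝒢 l).card : ℝ) * w i ω *
          (if p i ω ≤ BCthresh (𝒢 l) α (fun k => p k ω) then 1 else 0) /
        (1 + (((𝒢 l).filter (fun j =>
            1 - BCthresh (𝒢 l) α (fun k => p k ω) ≤ p j ω)).card : ℝ))) :
    ∫ ω, FDP n H0 (eBHreject n α (fun i => e i ω)) ∂μ ≤ α := by
  classical
  obtain ⟨hα0, hα1⟩ := hα
  rcases Nat.eq_zero_or_pos n with hn0 | hn
  · subst hn0
    have hzero : ∀ ω, FDP 0 H0 (eBHreject 0 α (fun i => e i ω)) = 0 := by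
      intro ω
      rw [FDP]
      have h1 : (eBHreject 0 α (fun i => e i ω) ∩ H0) = ∅ := Finset.eq_empty_of_isEmpty _
      rw [h1]
      simp
    have hint0 : ∫ ω, FDP 0 H0 (eBHreject 0 α (fun i => e i ω)) ∂μ = 0 := by
      rw [integral_congr_ae (Filter.Eventually.of_forall fun ω => hzero ω)]
      exact integral_zero _ _
    rw [hint0]
    exact hα0.le
  · set gl : Fin n → Fin L := fun i => (hpart i).choose with hgld
    have hgl1 : ∀ i, i ∈ 𝒢 (gl i) := fun i => (hpart i).choose_spec.1
    have hgl2 : ∀ i l, i ∈ 𝒢 l → l = gl i := fun i l h => (hpart i).choose_spec.2 l h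
    set Φ : Fin n → Ω → ℝ := fun i ω =>
      PhiV n L 𝒢 α (gl i) i (Function.update (fun k => p k ω) i (min (p i ω) (1 - p i ω))) *
        (if p i ω ≤ 1/2 then 1 else 0) with hΦd
    set Ψ : Fin n → Ω → ℝ := fun i ω =>
      PhiV n L 𝒢 α (gl i) i (Function.update (fun k => p k ω) i (min (p i ω) (1 - p i ω))) *
        (if 1/2 ≤ p i ω then 1 else 0) with hΨd
    have hebound : ∀ (i : Fin n) (ω : Ω), e i ω ≤ (n:ℝ) * Φ i ω := by
      intro i ω
      rw [he (gl i) i (hgl1 i) ω, hw (gl i) i (hgl1 i) ω]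
      exact e_le (hgl1 i) (fun k => p k ω)
    have henonneg : ∀ (i : Fin n) (ω : Ω), 0 ≤ e i ω := by
      intro i ω
      rw [he (gl i) i (hgl1 i) ω, hw (gl i) i (hgl1 i) ω]
      exact e_nonneg_aux (fun k => p k ω)
    have hvmeas : ∀ i : Fin n, Measurable fun ω =>
        Function.update (fun k => p k ω) i (min (p i ω) (1 - p i ω)) := by
      intro i
      apply measurable_pi_lambda
      intro k
      by_cases hk : k = i
      · subst hk
        simp only [Function.update_self]
        exact (hmeas k).min (measurable_const.sub (hmeas k))
      · simp only [Function.update_of_ne hk]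
        exact hmeas k
    have hΦmeas : ∀ i : Fin n, Measurable (Φ i) := fun i =>
      ((measurable_PhiV n L 𝒢 α (gl i) i).comp (hvmeas i)).mul
        (Measurable.ite (measurableSet_le (hmeas i) measurable_const)
          measurable_const measurable_const)
    have hΨmeas : ∀ i : Fin n, Measurable (Ψ i) := fun i =>
      ((measurable_PhiV n L 𝒢 α (gl i) i).comp (hvmeas i)).mul
        (Measurable.ite (measurableSet_le measurable_const (hmeas i))
          measurable_const measurable_const)
    have hΦbd : ∀ (i : Fin n) (ω : Ω), 0 ≤ Φ i ω ∧ Φ i ω ≤ 1 := fun i ω =>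
      PhiV_prod_bounds 𝒢 α (gl i) i _ _
    have hΨbd : ∀ (i : Fin n) (ω : Ω), 0 ≤ Ψ i ω ∧ Ψ i ω ≤ 1 := fun i ω =>
      PhiV_prod_bounds 𝒢 α (gl i) i _ _
    have hΦint : ∀ i : Fin n, Integrable (Φ i) μ := fun i =>
      Integrable.mono' (integrable_const 1) (hΦmeas i).aestronglyMeasurable
        (Filter.Eventually.of_forall fun ω => by
          rw [Real.norm_eq_abs, abs_of_nonneg (hΦbd i ω).1]
          exact (hΦbd i ω).2)
    have hΨint : ∀ i : Fin n, Integrable (Ψ i) μ := fun i =>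
      Integrable.mono' (integrable_const 1) (hΨmeas i).aestronglyMeasurable
        (Filter.Eventually.of_forall fun ω => by
          rw [Real.norm_eq_abs, abs_of_nonneg (hΨbd i ω).1]
          exact (hΨbd i ω).2)
    -- Step A : pointwise FDP bound
    have hFDPle : ∀ ω, FDP n H0 (eBHreject n α (fun i => e i ω)) ≤ α * ∑ i ∈ H0, Φ i ω := by
      intro ω
      refine le_trans (eBH_FDP_le hn hα0 (fun i => e i ω) (fun i => henonneg i ω) H0) ?_
      have h2 : ∑ i ∈ H0, e i ω ≤ ∑ i ∈ H0, (n:ℝ) * Φ i ω :=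
        Finset.sum_le_sum fun i _ => hebound i ω
      have hn' : (0:ℝ) < n := by exact_mod_cast hn
      calc (α/n) * ∑ i ∈ H0, e i ω ≤ (α/n) * ∑ i ∈ H0, (n:ℝ) * Φ i ω :=
            mul_le_mul_of_nonneg_left h2 (by positivity)
      _ = α * ∑ i ∈ H0, Φ i ω := by
            rw [← Finset.mul_sum]
            field_simp
    -- Step C : the swap, for i ∈ H0
    have hswap : ∀ i ∈ H0, ∫ ω, Φ i ω ∂μ ≤ ∫ ω, Ψ i ω ∂μ := by
      intro i hiH0
      have hinot : ∀ l' : Fin L, l' ≠ gl i → i ∉ 𝒢 l' :=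
        fun l' hne hmem => hne (hgl2 i l' hmem)
      set X : Ω → ℝ := fun ω => p i ω with hXd
      set Z : Ω → (Fin n → ℝ) := fun ω => Function.update (fun k => p k ω) i 0 with hZd
      have hXmeas : Measurable X := hmeas i
      have hZmeas : Measurable Z := by
        rw [hZd]
        apply measurable_pi_lambda
        intro k
        by_cases hk : k = i
        · subst hk
          simp only [Function.update_self]
          exact measurable_const
        · simp only [Function.update_of_ne hk]
          exact hmeas k
      -- independence of X and Z
      have hindXZ : IndepFun X Z μ := by
        set i₀ : {j // j ∈ H0} := ⟨i, hiH0⟩ with hi₀d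
        have hmeas' : ∀ j : {j // j ∈ H0}, Measurable (fun ω => p j.1 ω) := fun j => hmeas j.1
        have hdisj : Disjoint ({i₀} : Finset {j // j ∈ H0}) (Finset.univ.erase i₀) := by
          simp
        have I1 := hnullindep.indepFun_finset {i₀} (Finset.univ.erase i₀) hdisj hmeas'
        have hproj : Measurable fun v : ({i₀} : Finset {j // j ∈ H0}) → ℝ =>
            v ⟨i₀, Finset.mem_singleton_self i₀⟩ := measurable_pi_apply _
        have hXY : IndepFun X
            (fun ω (x : (Finset.univ.erase i₀ : Finset {j // j ∈ H0})) => p (x : {j // j ∈ H0}).1 ω) μ :=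
          I1.comp hproj measurable_id
        have hφ2 : Measurable fun v : {j // j ∈ H0} → ℝ =>
            (v i₀, fun x : (Finset.univ.erase i₀ : Finset {j // j ∈ H0}) => v (x : {j // j ∈ H0})) :=
          (measurable_pi_apply i₀).prodMk (measurable_pi_lambda _ fun x => measurable_pi_apply _)
        have hpairsep : IndepFun
            (fun ω => (X ω, fun x : (Finset.univ.erase i₀ : Finset {j // j ∈ H0}) =>
              p (x : {j // j ∈ H0}).1 ω))
            (fun ω => fun j : {j // j ∉ H0} => p j.1 ω) μ :=
          hsep.comp hφ2 measurable_id
        have h3 := indepFun_pair_right hXmeas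
          (measurable_pi_lambda _ fun x => hmeas _)
          (measurable_pi_lambda _ fun j => hmeas _) hXY hpairsep
        set ζ := fun (yw : ((↥(Finset.univ.erase i₀) : Type _) → ℝ) × ({j // j ∉ H0} → ℝ))
            (k : Fin n) =>
          if hk : k ∈ H0 then
            (if hki : k = i then (0:ℝ) else yw.1 ⟨⟨k, hk⟩, Finset.mem_erase.2
              ⟨fun hcon => hki (congrArg Subtype.val hcon), Finset.mem_univ _⟩⟩)
          else yw.2 ⟨k, hk⟩ with hζd
        have hζmeas : Measurable ζ := by
          apply measurable_pi_lambda
          intro k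
          by_cases hk : k ∈ H0
          · by_cases hki : k = i
            · simp only [hζd, dif_pos hk, dif_pos hki]
              exact measurable_const
            · simp only [hζd, dif_pos hk, dif_neg hki]
              exact (measurable_pi_apply _).comp measurable_fst
          · simp only [hζd, dif_neg hk]
            exact (measurable_pi_apply _).comp measurable_snd
        have hZeq : Z = fun ω => ζ
            ((fun x : (Finset.univ.erase i₀ : Finset {j // j ∈ H0}) => p (x : {j // j ∈ H0}).1 ω),
             (fun j : {j // j ∉ H0} => p j.1 ω)) := by
          funext ω
          funext k
          show Function.update (fun k' => p k' ω) i 0 k = _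
          by_cases hk : k ∈ H0
          · by_cases hki : k = i
            · subst hki
              simp only [hζd, dif_pos hk, Function.update_self]
              simp
            · simp only [hζd, dif_pos hk, dif_neg hki, Function.update_of_ne hki]
          · have hki : k ≠ i := fun h => hk (h ▸ hiH0)
            simp only [hζd, dif_neg hk, Function.update_of_ne hki]
        rw [hZeq]
        exact h3.comp measurable_id hζmeas
      -- product structure
      have hmap : μ.map (fun ω => (Z ω, X ω)) = (μ.map Z).prod (μ.map X) :=
        (indepFun_iff_map_prod_eq_prod_map_map hZmeas.aemeasurable hXmeas.aemeasurable).1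
          hindXZ.symm
      haveI hPX : IsProbabilityMeasure (μ.map X) := Measure.isProbabilityMeasure_map hXmeas.aemeasurable
      haveI hPZ : IsProbabilityMeasure (μ.map Z) := Measure.isProbabilityMeasure_map hZmeas.aemeasurable
      set g₁ : (Fin n → ℝ) × ℝ → ℝ := fun zx =>
        PhiV n L 𝒢 α (gl i) i (Function.update zx.1 i (min zx.2 (1 - zx.2))) *
          (if zx.2 ≤ 1/2 then 1 else 0) with hg₁d
      set g₂ : (Fin n → ℝ) × ℝ → ℝ := fun zx =>
        PhiV n L 𝒢 α (gl i) i (Function.update zx.1 i (min zx.2 (1 - zx.2))) *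
          (if 1/2 ≤ zx.2 then 1 else 0) with hg₂d
      have hupdmeas : Measurable fun zx : (Fin n → ℝ) × ℝ =>
          Function.update zx.1 i (min zx.2 (1 - zx.2)) := by
        apply measurable_pi_lambda
        intro k
        by_cases hk : k = i
        · subst hk
          simp only [Function.update_self]
          exact measurable_snd.min (measurable_const.sub measurable_snd)
        · simp only [Function.update_of_ne hk]
          exact (measurable_pi_apply k).comp measurable_fst
      have hg₁meas : Measurable g₁ :=
        ((measurable_PhiV n L 𝒢 α (gl i) i).comp hupdmeas).mul
          (Measurable.ite (measurableSet_le measurable_snd measurable_const)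
            measurable_const measurable_const)
      have hg₂meas : Measurable g₂ :=
        ((measurable_PhiV n L 𝒢 α (gl i) i).comp hupdmeas).mul
          (Measurable.ite (measurableSet_le measurable_const measurable_snd)
            measurable_const measurable_const)
      have hupdZ : ∀ ω, Function.update (Z ω) i (min (X ω) (1 - X ω))
          = Function.update (fun k => p k ω) i (min (p i ω) (1 - p i ω)) := by
        intro ω
        show Function.update (Function.update (fun k => p k ω) i 0) i
          (min (p i ω) (1 - p i ω)) = _
        rw [Function.update_idem]
      have hΦeq : ∀ ω, Φ i ω = g₁ (Z ω, X ω) := by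
        intro ω
        show _ = PhiV n L 𝒢 α (gl i) i (Function.update (Z ω) i (min (X ω) (1 - X ω))) *
          (if X ω ≤ 1/2 then 1 else 0)
        rw [hupdZ ω]
      have hΨeq : ∀ ω, Ψ i ω = g₂ (Z ω, X ω) := by
        intro ω
        show _ = PhiV n L 𝒢 α (gl i) i (Function.update (Z ω) i (min (X ω) (1 - X ω))) *
          (if 1/2 ≤ X ω then 1 else 0)
        rw [hupdZ ω]
      haveI : IsProbabilityMeasure ((μ.map Z).prod (μ.map X)) := by infer_instance
      have hg₁int : Integrable g₁ ((μ.map Z).prod (μ.map X)) :=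
        Integrable.mono' (integrable_const 1) hg₁meas.aestronglyMeasurable
          (Filter.Eventually.of_forall fun zx => by
            rw [Real.norm_eq_abs, abs_of_nonneg (PhiV_prod_bounds 𝒢 α (gl i) i _ _).1]
            exact (PhiV_prod_bounds 𝒢 α (gl i) i _ _).2)
      have hg₂int : Integrable g₂ ((μ.map Z).prod (μ.map X)) :=
        Integrable.mono' (integrable_const 1) hg₂meas.aestronglyMeasurable
          (Filter.Eventually.of_forall fun zx => by
            rw [Real.norm_eq_abs, abs_of_nonneg (PhiV_prod_bounds 𝒢 α (gl i) i _ _).1]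
            exact (PhiV_prod_bounds 𝒢 α (gl i) i _ _).2)
      have hint1 : ∫ ω, Φ i ω ∂μ = ∫ z, ∫ x, g₁ (z, x) ∂(μ.map X) ∂(μ.map Z) := by
        calc ∫ ω, Φ i ω ∂μ = ∫ ω, g₁ (Z ω, X ω) ∂μ :=
              integral_congr_ae (Filter.Eventually.of_forall hΦeq)
        _ = ∫ zx, g₁ zx ∂(μ.map fun ω => (Z ω, X ω)) :=
              (integral_map (hZmeas.prodMk hXmeas).aemeasurable
                hg₁meas.aestronglyMeasurable).symm
        _ = ∫ zx, g₁ zx ∂((μ.map Z).prod (μ.map X)) := by rw [hmap]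
        _ = ∫ z, ∫ x, g₁ (z, x) ∂(μ.map X) ∂(μ.map Z) := integral_prod _ hg₁int
      have hint2 : ∫ ω, Ψ i ω ∂μ = ∫ z, ∫ x, g₂ (z, x) ∂(μ.map X) ∂(μ.map Z) := by
        calc ∫ ω, Ψ i ω ∂μ = ∫ ω, g₂ (Z ω, X ω) ∂μ :=
              integral_congr_ae (Filter.Eventually.of_forall hΨeq)
        _ = ∫ zx, g₂ zx ∂(μ.map fun ω => (Z ω, X ω)) :=
              (integral_map (hZmeas.prodMk hXmeas).aemeasurable
                hg₂meas.aestronglyMeasurable).symm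
        _ = ∫ zx, g₂ zx ∂((μ.map Z).prod (μ.map X)) := by rw [hmap]
        _ = ∫ z, ∫ x, g₂ (z, x) ∂(μ.map X) ∂(μ.map Z) := integral_prod _ hg₂int
      -- inner comparison via the mirror lemma
      have hnullν : (μ.map X) {x | x < 0 ∨ 1 < x} = 0 := by
        have hbadmeas : MeasurableSet {x : ℝ | x < 0 ∨ 1 < x} := by
          have hseteq : {x : ℝ | x < 0 ∨ 1 < x} = Set.Iio 0 ∪ Set.Ioi 1 := by
            ext x
            simp [Set.mem_Iio, Set.mem_Ioi]
          rw [hseteq]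
          exact measurableSet_Iio.union measurableSet_Ioi
        rw [Measure.map_apply hXmeas hbadmeas]
        have hempty : X ⁻¹' {x | x < 0 ∨ 1 < x} = ∅ := by
          ext ω
          simp only [Set.mem_preimage, Set.mem_setOf_eq, Set.mem_empty_iff_false, iff_false,
            not_or, not_lt]
          exact ⟨(hrange i ω).1, (hrange i ω).2⟩
        rw [hempty]
        exact measure_empty
      have hcdfν : ∀ a : ℝ, 0 ≤ a → a ≤ 1/2 →
          (μ.map X) (Set.Iic a) ≤ (μ.map X) (Set.Ici (1 - a)) := by
        intro a ha0 ha2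
        rw [Measure.map_apply hXmeas measurableSet_Iic,
          Measure.map_apply hXmeas measurableSet_Ici]
        exact hsym i hiH0 a ha0 ha2
      have hinner : ∀ z : Fin n → ℝ,
          ∫ x, g₁ (z, x) ∂(μ.map X) ≤ ∫ x, g₂ (z, x) ∂(μ.map X) := by
        intro z
        exact mirror_le (μ.map X) hnullν hcdfν
          {u | 0 ≤ u ∧ u ≤ 1/2 ∧ u ≤ BCthresh (𝒢 (gl i)) α (Function.update z i u)}
          (fun u hu => ⟨hu.1, hu.2.1⟩)
          (fun u hu u' h0 h1 => ⟨h0, le_trans h1 hu.2.1,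
            le_trans (le_trans h1 hu.2.2)
              (BCthresh_update_mono (hgl1 i) h1 hu.2.1)⟩)
          (fun u => PhiV n L 𝒢 α (gl i) i (Function.update z i u))
          (fun u => PhiV_nonneg _ _ _ _ _ _ _)
          (fun u h0 h2 hnD => PhiV_eq_zero (fun hcon => hnD ⟨h0, h2, by
            rwa [Function.update_self] at hcon⟩))
          (fun u hu u' hu' => by
            rcases le_total u u' with h | h
            · exact PhiV_slot_eq (hgl1 i) hinot z h hu'.2.1 hu'.2.2
            · exact (PhiV_slot_eq (hgl1 i) hinot z h hu.2.1 hu.2.2).symm)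
      have houter : ∫ z, ∫ x, g₁ (z, x) ∂(μ.map X) ∂(μ.map Z)
          ≤ ∫ z, ∫ x, g₂ (z, x) ∂(μ.map X) ∂(μ.map Z) :=
        integral_mono_of_nonneg
          (Filter.Eventually.of_forall fun z => integral_nonneg fun x =>
            (PhiV_prod_bounds 𝒢 α (gl i) i _ _).1)
          hg₂int.integral_prod_left
          (Filter.Eventually.of_forall hinner)
      rw [hint1, hint2]
      exact houter
    -- Step D : pointwise sum bound on Ψ
    have hDsum : ∀ ω, ∑ i ∈ H0, Ψ i ω ≤ 1 := by
      intro ω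
      exact sum_Psi_le_one gl hgl1 hgl2 (fun k => p k ω) H0
    -- Final assembly
    have hFDPnn : ∀ ω, 0 ≤ FDP n H0 (eBHreject n α (fun i => e i ω)) := by
      intro ω
      exact div_nonneg (Nat.cast_nonneg _) (le_trans zero_le_one (le_max_left _ _))
    have hgint : Integrable (fun ω => α * ∑ i ∈ H0, Φ i ω) μ :=
      (integrable_finset_sum H0 (fun i _ => hΦint i)).const_mul α
    have hstep1 : ∫ ω, FDP n H0 (eBHreject n α (fun i => e i ω)) ∂μ
        ≤ ∫ ω, α * ∑ i ∈ H0, Φ i ω ∂μ :=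
      integral_mono_of_nonneg (Filter.Eventually.of_forall hFDPnn) hgint
        (Filter.Eventually.of_forall hFDPle)
    have hstep2 : ∫ ω, α * ∑ i ∈ H0, Φ i ω ∂μ = α * ∑ i ∈ H0, ∫ ω, Φ i ω ∂μ := by
      rw [integral_const_mul]
      congr 1
      exact integral_finset_sum H0 (fun i _ => hΦint i)
    have hstep3 : ∑ i ∈ H0, ∫ ω, Φ i ω ∂μ ≤ ∑ i ∈ H0, ∫ ω, Ψ i ω ∂μ :=
      Finset.sum_le_sum (fun i hi => hswap i hi)
    have hstep4 : ∑ i ∈ H0, ∫ ω, Ψ i ω ∂μ = ∫ ω, ∑ i ∈ H0, Ψ i ω ∂μ :=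
      (integral_finset_sum H0 (fun i _ => hΨint i)).symm
    have hstep5 : ∫ ω, ∑ i ∈ H0, Ψ i ω ∂μ ≤ 1 := by
      have h1 : ∫ ω, ∑ i ∈ H0, Ψ i ω ∂μ ≤ ∫ _ω, (1:ℝ) ∂μ :=
        integral_mono_of_nonneg
          (Filter.Eventually.of_forall fun ω =>
            Finset.sum_nonneg fun i _ => (hΨbd i ω).1)
          (integrable_const 1)
          (Filter.Eventually.of_forall hDsum)
      simpa using h1
    calc ∫ ω, FDP n H0 (eBHreject n α (fun i => e i ω)) ∂μ
        ≤ α * ∑ i ∈ H0, ∫ ω, Φ i ω ∂μ := by rw [← hstep2]; exact hstep1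
    _ ≤ α * ∑ i ∈ H0, ∫ ω, Ψ i ω ∂μ := mul_le_mul_of_nonneg_left hstep3 hα0.le
    _ = α * ∫ ω, ∑ i ∈ H0, Ψ i ω ∂μ := by rw [hstep4]
    _ ≤ α * 1 := mul_le_mul_of_nonneg_left hstep5 hα0.le
    _ = α := mul_one α
end

section
/- Let a_1,…,a_L and r_1,…,r_L be nonnegative integer-valued random variables on a common probability space with a_l ≤ r_l almost surely, and suppose E[a_l / max(1, r_l)] ≤ α/L for each l = 1,…,L. Then E[(Σ_{l=1}^L a_l) / max(1, Σ_{l=1}^L r_l)] ≤ α. -/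
open MeasureTheory Finset

/-- if `a_l ≤ r_l` a.s. and each group-wise FDR
`E[a_l / max(1, r_l)]` is at most `α/L`, then the overall FDR
`E[(∑_l a_l)/max(1, ∑_l r_l)]` is at most `α`. -/
theorem groupwise_to_overall_fdr
    {Ω : Type*} [MeasurableSpace Ω] (μ : Measure Ω) [IsProbabilityMeasure μ]
    (L : ℕ) (hL : 0 < L) (α : ℝ)
    (a r : Fin L → Ω → ℕ)
    (hameas : ∀ l, Measurable (a l)) (hrmeas : ∀ l, Measurable (r l))
    (hle : ∀ l, ∀ᵐ ω ∂μ, a l ω ≤ r l ω)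
    (hctrl : ∀ l, ∫ ω, (a l ω : ℝ) / max 1 (r l ω : ℝ) ∂μ ≤ α / L) :
    ∫ ω, ((∑ l, a l ω : ℕ) : ℝ) / max 1 ((∑ l, r l ω : ℕ) : ℝ) ∂μ ≤ α := by
  have hle' : ∀ᵐ ω ∂μ, ∀ l, a l ω ≤ r l ω := (ae_all_iff).2 hle
  set g : Fin L → Ω → ℝ := fun l ω => (a l ω : ℝ) / max 1 (r l ω : ℝ) with hg
  set f : Ω → ℝ := fun ω => ((∑ l, a l ω : ℕ) : ℝ) / max 1 ((∑ l, r l ω : ℕ) : ℝ) with hf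
  have hgmeas : ∀ l, Measurable (g l) := fun l =>
    (measurable_from_top.comp (hameas l)).div (measurable_const.max (measurable_from_top.comp (hrmeas l)))
  have hfmeas : Measurable f := by
    apply Measurable.div
    · exact measurable_from_top.comp (Finset.measurable_sum Finset.univ fun l _ => hameas l)
    · exact measurable_const.max
        (measurable_from_top.comp (Finset.measurable_sum Finset.univ fun l _ => hrmeas l))
  -- each g l is integrable (a.e. bounded by 1, nonneg)
  have hgint : ∀ l, Integrable (g l) μ := by
    intro l
    refine Integrable.mono' (integrable_const 1) (hgmeas l).aestronglyMeasurable ?_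
    filter_upwards [hle l] with ω h
    rw [Real.norm_eq_abs, abs_of_nonneg (by positivity)]
    have h1 : (a l ω : ℝ) ≤ max 1 (r l ω : ℝ) :=
      le_max_of_le_right (by exact_mod_cast h)
    have h2 : (0:ℝ) < max 1 (r l ω : ℝ) := lt_max_of_lt_left one_pos
    exact div_le_one_of_le₀ h1 h2.le
  -- f is integrable
  have hfint : Integrable f μ := by
    refine Integrable.mono' (integrable_const 1) hfmeas.aestronglyMeasurable ?_
    filter_upwards [hle'] with ω h
    rw [Real.norm_eq_abs, abs_of_nonneg (by positivity)]
    have h1 : ((∑ l, a l ω : ℕ) : ℝ) ≤ max 1 ((∑ l, r l ω : ℕ) : ℝ) := by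
      refine le_max_of_le_right ?_
      exact_mod_cast Finset.sum_le_sum fun l _ => h l
    exact div_le_one_of_le₀ h1 (lt_max_of_lt_left one_pos).le
  -- pointwise a.e. bound : f ≤ ∑ g l
  have hmono : ∀ᵐ ω ∂μ, f ω ≤ ∑ l, g l ω := by
    filter_upwards [hle'] with ω h
    have hM : (0:ℝ) < max 1 ((∑ l, r l ω : ℕ) : ℝ) := lt_max_of_lt_left one_pos
    calc f ω = ∑ l, (a l ω : ℝ) / max 1 ((∑ l, r l ω : ℕ) : ℝ) := by
          rw [hf, ← Finset.sum_div]
          push_cast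
          ring
      _ ≤ ∑ l, g l ω := by
          refine Finset.sum_le_sum fun l _ => ?_
          have hml : max 1 (r l ω : ℝ) ≤ max 1 ((∑ l, r l ω : ℕ) : ℝ) := by
            refine max_le_max le_rfl ?_
            exact_mod_cast Finset.single_le_sum (f := fun l => r l ω)
              (fun i _ => Nat.zero_le _) (Finset.mem_univ l)
          have hml0 : (0:ℝ) < max 1 (r l ω : ℝ) := lt_max_of_lt_left one_pos
          exact div_le_div_of_nonneg_left (by positivity) hml0 hml |>.trans_eq rfl |>.trans le_rfl
            |>.trans le_rfl
  have step : ∫ ω, f ω ∂μ ≤ ∫ ω, ∑ l, g l ω ∂μ :=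
    integral_mono_ae hfint (integrable_finset_sum _ fun l _ => hgint l) hmono
  calc ∫ ω, f ω ∂μ ≤ ∫ ω, ∑ l, g l ω ∂μ := step
    _ = ∑ l, ∫ ω, g l ω ∂μ := integral_finset_sum _ fun l _ => (hgint l)
    _ ≤ ∑ _l : Fin L, α / L := Finset.sum_le_sum fun l _ => hctrl l
    _ = α := by
        rw [Finset.sum_const, Finset.card_univ, Fintype.card_fin, nsmul_eq_mul]
        field_simp
end
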